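/- arXiv:1708.08098 — 6 statements merged into one kernel-verified Lean document; each statement's English description precedes it below -/
import Mathlib

section
/- Assume β = 0 and that all unit production costs are equal: c_t = c > 0 for every t. For 1 ≤ m ≤ n ≤ T and B ≥ 0 let BB_{m,n}(B) ∈ ℝ ∪ {−∞} be the supremum (sup ∅ = −∞) of B_n − B over all feasible plans on periods m..n with initial inventory 0, initial capital B, and ending inventory I_n = 0. Define B_0* = B_0 and, recursively for n = 1,…,T, B_n* = max_{1 ≤ m ≤ n} ( B_{m−1}* + BB_{m,n}(B_{m−1}*) ), with the convention (−∞) + x = −∞. Then B_T* equals the supremum of the final capital B_T over all feasible plans on periods 1..T. -/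
noncomputable def setupInd (x : ℝ) : ℝ := if 0 < x then 1 else 0

noncomputable def wSeq (d : ℕ → ℝ) (β : ℝ) (v : ℕ → ℝ) : ℕ → ℝ
  | 0 => 0
  | t + 1 => max 0 (d (t + 1) - β * wSeq d β v t) - v (t + 1)

noncomputable def EdSeq (d : ℕ → ℝ) (β : ℝ) (v : ℕ → ℝ) (t : ℕ) : ℝ :=
  max 0 (d t - β * wSeq d β v (t - 1))

noncomputable def ISeq (y v : ℕ → ℝ) (m t : ℕ) : ℝ :=
  ∑ j ∈ Finset.Icc m t, (y j - v j)

noncomputable def BSeq (p h s c : ℕ → ℝ) (R : ℝ) (TL : ℕ) (y v : ℕ → ℝ)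
    (m : ℕ) (Binit : ℝ) : ℕ → ℝ
  | 0 => Binit
  | t + 1 =>
    if t + 1 < m then Binit
    else
      BSeq p h s c R TL y v m Binit t + p (t + 1) * v (t + 1)
        - h (t + 1) * ISeq y v m (t + 1)
        - s (t + 1) * setupInd (y (t + 1))
        - c (t + 1) * y (t + 1)
        - (if t + 1 = TL then R else 0)

/-- Feasibility of a full-horizon plan (periods 1..T). -/
def Feasible (T : ℕ) (d p c h s : ℕ → ℝ) (β B0 R : ℝ) (TL : ℕ)
    (y v : ℕ → ℝ) : Prop :=
  ∀ t, 1 ≤ t → t ≤ T →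
    0 ≤ y t ∧ 0 ≤ v t ∧ v t ≤ EdSeq d β v t ∧
    0 ≤ ISeq y v 1 t ∧
    s t * setupInd (y t) + c t * y t ≤ BSeq p h s c R TL y v 1 B0 (t - 1) ∧
    0 ≤ BSeq p h s c R TL y v 1 B0 t

/-- Feasibility of a plan on periods m..n, β = 0 case (sales bounded by demand),
with initial inventory 0 and initial capital `Binit`. -/
def FeasibleSeg (m n : ℕ) (d p c h s : ℕ → ℝ) (R : ℝ) (TL : ℕ) (Binit : ℝ)
    (y v : ℕ → ℝ) : Prop :=
  ∀ t, m ≤ t → t ≤ n →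
    0 ≤ y t ∧ 0 ≤ v t ∧ v t ≤ d t ∧
    0 ≤ ISeq y v m t ∧
    s t * setupInd (y t) + c t * y t ≤ BSeq p h s c R TL y v m Binit (t - 1) ∧
    0 ≤ BSeq p h s c R TL y v m Binit t

/-- `BB m n B` : supremum (in `EReal`, `sSup ∅ = ⊥ = -∞`) of the capital increment
`B_n - B` over feasible plans on periods m..n with initial inventory 0, initial
capital `B`, and ending inventory `I_n = 0` (β = 0 model). -/
noncomputable def BB (d p c h s : ℕ → ℝ) (R : ℝ) (TL m n : ℕ) (B : ℝ) : EReal :=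
  sSup {x : EReal | ∃ y v : ℕ → ℝ,
    FeasibleSeg m n d p c h s R TL B y v ∧ ISeq y v m n = 0 ∧
    x = ((BSeq p h s c R TL y v m B n - B : ℝ) : EReal)}

open Finset

noncomputable def per (p h s c : ℕ → ℝ) (R : ℝ) (TL : ℕ) (y v : ℕ → ℝ) (m j : ℕ) : ℝ :=
  p j * v j - h j * ISeq y v m j - s j * setupInd (y j) - c j * y j
    - (if j = TL then R else 0)

lemma BSeq_eq_sum (p h s c : ℕ → ℝ) (R : ℝ) (TL : ℕ) (y v : ℕ → ℝ) {m : ℕ} (hm : 1 ≤ m)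
    (B : ℝ) (t : ℕ) :
    BSeq p h s c R TL y v m B t = B + ∑ j ∈ Finset.Icc m t, per p h s c R TL y v m j := by
  induction t with
  | zero => rw [Finset.Icc_eq_empty (by omega)]; simp [BSeq]
  | succ t ih =>
    rw [BSeq]
    by_cases hlt : t + 1 < m
    · rw [if_pos hlt, Finset.Icc_eq_empty (by omega)]; simp
    · rw [if_neg hlt, Finset.sum_Icc_succ_top (by omega), ih, per]; ring

lemma ISeq_congr {y v y' v' : ℕ → ℝ} {m t : ℕ}
    (hy : ∀ j ∈ Finset.Icc m t, y j = y' j) (hv : ∀ j ∈ Finset.Icc m t, v j = v' j) :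
    ISeq y v m t = ISeq y' v' m t := by
  unfold ISeq
  exact Finset.sum_congr rfl fun j hj => by rw [hy j hj, hv j hj]

lemma BSeq_congr (p h s c : ℕ → ℝ) (R : ℝ) (TL : ℕ) {y v y' v' : ℕ → ℝ} {m : ℕ}
    (hm : 1 ≤ m) (B : ℝ) (t : ℕ)
    (hy : ∀ j ∈ Finset.Icc m t, y j = y' j) (hv : ∀ j ∈ Finset.Icc m t, v j = v' j) :
    BSeq p h s c R TL y v m B t = BSeq p h s c R TL y' v' m B t := by
  rw [BSeq_eq_sum p h s c R TL y v hm B t, BSeq_eq_sum p h s c R TL y' v' hm B t]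
  congr 1
  refine Finset.sum_congr rfl fun j hj => ?_
  simp only [Finset.mem_Icc] at hj
  have hsub : ∀ i ∈ Finset.Icc m j, i ∈ Finset.Icc m t := by
    intro i hi; simp only [Finset.mem_Icc] at hi ⊢; omega
  unfold per
  rw [hy j (by simp [Finset.mem_Icc]; omega), hv j (by simp [Finset.mem_Icc]; omega),
    ISeq_congr (fun i hi => hy i (hsub i hi)) (fun i hi => hv i (hsub i hi))]

lemma BSeq_shift (p h s c : ℕ → ℝ) (R : ℝ) (TL : ℕ) (y v : ℕ → ℝ) (m : ℕ) (B δ : ℝ) (t : ℕ) :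
    BSeq p h s c R TL y v m (B + δ) t = BSeq p h s c R TL y v m B t + δ := by
  induction t with
  | zero => simp [BSeq]
  | succ t ih =>
    rw [BSeq, BSeq]
    by_cases hlt : t + 1 < m
    · simp [hlt]
    · simp only [if_neg hlt]; rw [ih]; ring

lemma ISeq_split (y v : ℕ → ℝ) {m t : ℕ} (hm : 1 ≤ m) (hmt : m - 1 ≤ t) :
    ISeq y v 1 t = ISeq y v 1 (m - 1) + ISeq y v m t := by
  obtain ⟨k, rfl⟩ : ∃ k, m = k + 1 := ⟨m - 1, by omega⟩
  unfold ISeq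
  simp only [Nat.add_sub_cancel]
  rw [Finset.Icc_add_one_left_eq_Ioc k t, show (1:ℕ) = 0 + 1 from rfl, Finset.Icc_add_one_left_eq_Ioc 0 t,
    Finset.Icc_add_one_left_eq_Ioc 0 k]
  exact (Finset.sum_Ioc_consecutive _ (Nat.zero_le k) (by omega)).symm

lemma FeasibleSeg_mono {m n : ℕ} {d p c h s : ℕ → ℝ} {R : ℝ} {TL : ℕ} {b B' : ℝ}
    {y v : ℕ → ℝ} (hb : b ≤ B') (hf : FeasibleSeg m n d p c h s R TL b y v) :
    FeasibleSeg m n d p c h s R TL B' y v := by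
  have e : ∀ u, BSeq p h s c R TL y v m B' u = BSeq p h s c R TL y v m b u + (B' - b) := by
    intro u; rw [← BSeq_shift p h s c R TL y v m b (B' - b) u]; congr 1; ring
  intro t ht1 ht2
  obtain ⟨h1, h2, h3, h4, h5, h6⟩ := hf t ht1 ht2
  exact ⟨h1, h2, h3, h4, by rw [e]; linarith, by rw [e]; linarith⟩
lemma setupInd_nonneg (x : ℝ) : 0 ≤ setupInd x := by
  unfold setupInd; split_ifs <;> norm_num

lemma setupInd_le_one (x : ℝ) : setupInd x ≤ 1 := by
  unfold setupInd; split_ifs <;> norm_num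

lemma BSeq_init (p h s c : ℕ → ℝ) (R : ℝ) (TL : ℕ) (y v : ℕ → ℝ) {m : ℕ} (B : ℝ)
    {t : ℕ} (ht : t < m) : BSeq p h s c R TL y v m B t = B := by
  cases t with
  | zero => rfl
  | succ t => rw [BSeq, if_pos ht]

lemma per_le {d p c h s : ℕ → ℝ} {R : ℝ} {TL : ℕ}
    (hp : ∀ t, 0 ≤ p t) (hh : ∀ t, 0 ≤ h t) (hs : ∀ t, 0 ≤ s t) (hc : ∀ t, 0 ≤ c t)
    (hR : 0 ≤ R) {y v : ℕ → ℝ} {m j : ℕ}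
    (hy : 0 ≤ y j) (hv : 0 ≤ v j) (hvd : v j ≤ d j) (hI : 0 ≤ ISeq y v m j) :
    per p h s c R TL y v m j ≤ p j * d j := by
  unfold per
  have h1 : p j * v j ≤ p j * d j := mul_le_mul_of_nonneg_left hvd (hp j)
  have h2 : 0 ≤ h j * ISeq y v m j := mul_nonneg (hh j) hI
  have h3 : 0 ≤ s j * setupInd (y j) := mul_nonneg (hs j) (setupInd_nonneg _)
  have h4 : 0 ≤ c j * y j := mul_nonneg (hc j) hy
  have h5 : (0:ℝ) ≤ (if j = TL then R else 0) := by split_ifs <;> simp [hR]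
  linarith

lemma BSeq_le_cap {m n : ℕ} {d p c h s : ℕ → ℝ} {R : ℝ} {TL : ℕ} {B : ℝ} {y v : ℕ → ℝ}
    (hm : 1 ≤ m)
    (hp : ∀ t, 0 ≤ p t) (hh : ∀ t, 0 ≤ h t) (hs : ∀ t, 0 ≤ s t) (hc : ∀ t, 0 ≤ c t)
    (hd : ∀ t, 0 ≤ d t) (hR : 0 ≤ R)
    (hf : FeasibleSeg m n d p c h s R TL B y v) {t : ℕ} (htn : t ≤ n) :
    BSeq p h s c R TL y v m B t ≤ B + ∑ j ∈ Finset.Icc m n, p j * d j := by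
  rw [BSeq_eq_sum p h s c R TL y v hm B t]
  have h1 : ∑ j ∈ Finset.Icc m t, per p h s c R TL y v m j ≤
      ∑ j ∈ Finset.Icc m t, p j * d j := by
    refine Finset.sum_le_sum fun j hj => ?_
    simp only [Finset.mem_Icc] at hj
    obtain ⟨a1, a2, a3, a4, _, _⟩ := hf j hj.1 (le_trans hj.2 htn)
    exact per_le hp hh hs hc hR a1 a2 a3 a4
  have h2 : ∑ j ∈ Finset.Icc m t, p j * d j ≤ ∑ j ∈ Finset.Icc m n, p j * d j := by
    refine Finset.sum_le_sum_of_subset_of_nonneg ?_ fun j _ _ => mul_nonneg (hp j) (hd j)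
    intro j hj; simp only [Finset.mem_Icc] at hj ⊢; omega
  linarith

lemma BB_le_sum {m n : ℕ} {d p c h s : ℕ → ℝ} {R : ℝ} {TL : ℕ} (B : ℝ)
    (hm : 1 ≤ m)
    (hp : ∀ t, 0 ≤ p t) (hh : ∀ t, 0 ≤ h t) (hs : ∀ t, 0 ≤ s t) (hc : ∀ t, 0 ≤ c t)
    (hd : ∀ t, 0 ≤ d t) (hR : 0 ≤ R) :
    BB d p c h s R TL m n B ≤ ((∑ j ∈ Finset.Icc m n, p j * d j : ℝ) : EReal) := by
  refine sSup_le ?_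
  rintro x ⟨y, v, hf, hI, rfl⟩
  rw [EReal.coe_le_coe_iff]
  have := BSeq_le_cap hm hp hh hs hc hd hR hf (le_refl n)
  linarith

lemma BB_ne_top {m n : ℕ} {d p c h s : ℕ → ℝ} {R : ℝ} {TL : ℕ} (B : ℝ)
    (hm : 1 ≤ m)
    (hp : ∀ t, 0 ≤ p t) (hh : ∀ t, 0 ≤ h t) (hs : ∀ t, 0 ≤ s t) (hc : ∀ t, 0 ≤ c t)
    (hd : ∀ t, 0 ≤ d t) (hR : 0 ≤ R) :
    BB d p c h s R TL m n B ≠ ⊤ :=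
  ne_top_of_le_ne_top (EReal.coe_ne_top _) (BB_le_sum B hm hp hh hs hc hd hR)

lemma BB_mono {m n : ℕ} {d p c h s : ℕ → ℝ} {R : ℝ} {TL : ℕ} {B B' : ℝ} (hB : B ≤ B') :
    BB d p c h s R TL m n B ≤ BB d p c h s R TL m n B' := by
  refine sSup_le_sSup ?_
  rintro x ⟨y, v, hf, hI, rfl⟩
  refine ⟨y, v, FeasibleSeg_mono hB hf, hI, ?_⟩
  have e : BSeq p h s c R TL y v m B' n = BSeq p h s c R TL y v m B n + (B' - B) := by
    rw [← BSeq_shift p h s c R TL y v m B (B' - B) n]; congr 1; ring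
  rw [EReal.coe_eq_coe_iff, e]; ring

lemma concat {m n : ℕ} (hm : 1 ≤ m) {d p c h s : ℕ → ℝ} {R : ℝ} {TL : ℕ} {B0 : ℝ}
    {y1 v1 y2 v2 : ℕ → ℝ}
    (hf1 : FeasibleSeg 1 (m - 1) d p c h s R TL B0 y1 v1)
    (hI1 : ISeq y1 v1 1 (m - 1) = 0)
    (hf2 : FeasibleSeg m n d p c h s R TL (BSeq p h s c R TL y1 v1 1 B0 (m - 1)) y2 v2) :
    ∃ y v : ℕ → ℝ, FeasibleSeg 1 n d p c h s R TL B0 y v ∧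
      (∀ t, m - 1 ≤ t → ISeq y v 1 t = ISeq y2 v2 m t) ∧
      (∀ t, m - 1 ≤ t → BSeq p h s c R TL y v 1 B0 t =
        BSeq p h s c R TL y2 v2 m (BSeq p h s c R TL y1 v1 1 B0 (m - 1)) t) := by
  set B' := BSeq p h s c R TL y1 v1 1 B0 (m - 1) with hB'
  set y : ℕ → ℝ := fun t => if t < m then y1 t else y2 t with hy
  set v : ℕ → ℝ := fun t => if t < m then v1 t else v2 t with hv
  have hyv1 : ∀ j, j < m → y j = y1 j ∧ v j = v1 j := by
    intro j hj; simp [hy, hv, hj]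
  have hyv2 : ∀ j, m ≤ j → y j = y2 j ∧ v j = v2 j := by
    intro j hj; simp [hy, hv, Nat.not_lt.mpr hj]
  have e1 : ∀ t, t ≤ m - 1 → BSeq p h s c R TL y v 1 B0 t = BSeq p h s c R TL y1 v1 1 B0 t :=
    fun t ht => BSeq_congr p h s c R TL (le_refl 1) B0 t
      (fun j hj => (hyv1 j (by simp only [Finset.mem_Icc] at hj; omega)).1)
      (fun j hj => (hyv1 j (by simp only [Finset.mem_Icc] at hj; omega)).2)
  have eI1 : ∀ t, t ≤ m - 1 → ISeq y v 1 t = ISeq y1 v1 1 t :=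
    fun t ht => ISeq_congr
      (fun j hj => (hyv1 j (by simp only [Finset.mem_Icc] at hj; omega)).1)
      (fun j hj => (hyv1 j (by simp only [Finset.mem_Icc] at hj; omega)).2)
  have eI2 : ∀ t, ISeq y v m t = ISeq y2 v2 m t :=
    fun t => ISeq_congr
      (fun j hj => (hyv2 j (by simp only [Finset.mem_Icc] at hj; omega)).1)
      (fun j hj => (hyv2 j (by simp only [Finset.mem_Icc] at hj; omega)).2)
  have eImix : ∀ t, m - 1 ≤ t → ISeq y v 1 t = ISeq y2 v2 m t := by
    intro t ht
    rw [ISeq_split y v hm ht, eI1 (m - 1) (le_refl _), hI1, eI2]; ring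
  have eB : ∀ t, m - 1 ≤ t → BSeq p h s c R TL y v 1 B0 t =
      BSeq p h s c R TL y2 v2 m B' t := by
    intro t ht
    induction t with
    | zero =>
      rw [BSeq_init p h s c R TL y2 v2 B' (by omega : 0 < m), e1 0 (by omega)]
      have h0 : m - 1 = 0 := by omega
      rw [hB', h0]
    | succ t ih =>
      by_cases htm : m - 1 ≤ t
      · have ihh := ih htm
        rw [BSeq, BSeq, if_neg (by omega), if_neg (by omega : ¬ t + 1 < m), ihh,
          eImix (t+1) (by omega), (hyv2 (t+1) (by omega)).1, (hyv2 (t+1) (by omega)).2]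
      · -- t + 1 = m - 1
        have ht1 : t + 1 = m - 1 := by omega
        rw [BSeq_init p h s c R TL y2 v2 B' (by omega : t + 1 < m), e1 (t+1) (by omega), hB', ht1]
  refine ⟨y, v, ?_, eImix, eB⟩
  intro t ht1 ht2
  by_cases htm : t < m
  · obtain ⟨a1, a2, a3, a4, a5, a6⟩ := hf1 t ht1 (by omega)
    refine ⟨?_, ?_, ?_, ?_, ?_, ?_⟩
    · rw [(hyv1 t htm).1]; exact a1
    · rw [(hyv1 t htm).2]; exact a2
    · rw [(hyv1 t htm).2]; exact a3
    · rw [eI1 t (by omega)]; exact a4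
    · rw [(hyv1 t htm).1, e1 (t-1) (by omega)]; exact a5
    · rw [e1 t (by omega)]; exact a6
  · push_neg at htm
    obtain ⟨a1, a2, a3, a4, a5, a6⟩ := hf2 t htm ht2
    refine ⟨?_, ?_, ?_, ?_, ?_, ?_⟩
    · rw [(hyv2 t htm).1]; exact a1
    · rw [(hyv2 t htm).2]; exact a2
    · rw [(hyv2 t htm).2]; exact a3
    · rw [eImix t (by omega)]; exact a4
    · rw [(hyv2 t htm).1, eB (t-1) (by omega)]; exact a5
    · rw [eB t (by omega)]; exact a6
lemma ISeq_sub (y v : ℕ → ℝ) (m t : ℕ) :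
    ISeq y v m t = (∑ j ∈ Finset.Icc m t, y j) - ∑ j ∈ Finset.Icc m t, v j := by
  unfold ISeq; rw [Finset.sum_sub_distrib]

lemma trim {T : ℕ} (hT : 1 ≤ T) {d p c h s : ℕ → ℝ} {R : ℝ} {TL : ℕ} {B0 : ℝ}
    {y v : ℕ → ℝ}
    (hh : ∀ t, 0 ≤ h t) (hs : ∀ t, 0 ≤ s t) (hc : ∀ t, 0 ≤ c t)
    (hf : FeasibleSeg 1 T d p c h s R TL B0 y v) :
    ∃ y' : ℕ → ℝ, FeasibleSeg 1 T d p c h s R TL B0 y' v ∧ ISeq y' v 1 T = 0 ∧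
      BSeq p h s c R TL y v 1 B0 T ≤ BSeq p h s c R TL y' v 1 B0 T := by
  set V : ℝ := ∑ j ∈ Finset.Icc 1 T, v j with hV
  set Y : ℕ → ℝ := fun t => ∑ j ∈ Finset.Icc 1 t, y j with hY
  set y' : ℕ → ℝ := fun t => min (y t) (max 0 (V - Y (t - 1))) with hy'
  have hv0 : 0 ≤ V := Finset.sum_nonneg fun j hj => by
    simp only [Finset.mem_Icc] at hj; exact (hf j hj.1 hj.2).2.1
  have hVt : ∀ t, t ≤ T → ∑ j ∈ Finset.Icc 1 t, v j ≤ V := by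
    intro t ht
    refine Finset.sum_le_sum_of_subset_of_nonneg ?_ fun j hj _ => ?_
    · intro j hj; simp only [Finset.mem_Icc] at hj ⊢; omega
    · simp only [Finset.mem_Icc] at hj; exact (hf j hj.1 hj.2).2.1
  have hsum : ∀ t, t ≤ T → ∑ j ∈ Finset.Icc 1 t, y' j = min (Y t) V := by
    intro t ht
    induction t with
    | zero => simp [hY, min_eq_left hv0]
    | succ t ih =>
      have hyt : 0 ≤ y (t + 1) := (hf (t+1) (by omega) ht).1
      rw [Finset.sum_Icc_succ_top (by omega), ih (by omega)]
      have hYs : Y (t + 1) = Y t + y (t + 1) := by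
        simp only [hY]; rw [Finset.sum_Icc_succ_top (by omega)]
      have hy'e : y' (t + 1) = min (y (t + 1)) (max 0 (V - Y t)) := by
        simp [hy']
      rw [hy'e, hYs]
      rcases le_total (Y t) V with h1 | h1 <;>
        rcases le_total (y (t + 1)) (V - Y t) with h2 | h2 <;>
        simp only [min_def, max_def] <;> split_ifs <;> linarith
  have hYIle : ∀ t, 1 ≤ t → t ≤ T → ∑ j ∈ Finset.Icc 1 t, v j ≤ Y t := by
    intro t h1 h2
    have := (hf t h1 h2).2.2.2.1
    rw [ISeq_sub] at this
    simp only [hY]; linarith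
  have hI' : ∀ t, 1 ≤ t → t ≤ T → ISeq y' v 1 t = min (Y t) V - ∑ j ∈ Finset.Icc 1 t, v j := by
    intro t h1 h2; rw [ISeq_sub, hsum t h2]
  have hI'nn : ∀ t, 1 ≤ t → t ≤ T → 0 ≤ ISeq y' v 1 t := by
    intro t h1 h2; rw [hI' t h1 h2]
    have := hYIle t h1 h2
    have := hVt t h2
    rcases le_total (Y t) V with h | h <;> simp [min_def] <;> split_ifs <;> linarith
  have hI'le : ∀ t, 1 ≤ t → t ≤ T → ISeq y' v 1 t ≤ ISeq y v 1 t := by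
    intro t h1 h2; rw [hI' t h1 h2, ISeq_sub]
    have : min (Y t) V ≤ Y t := min_le_left _ _
    simp only [hY] at this ⊢; linarith
  have hy'le : ∀ t, y' t ≤ y t := fun t => min_le_left _ _
  have hy'nn : ∀ t, 1 ≤ t → t ≤ T → 0 ≤ y' t := by
    intro t h1 h2
    exact le_min (hf t h1 h2).1 (le_max_left _ _)
  have hsetup : ∀ t, setupInd (y' t) ≤ setupInd (y t) := by
    intro t; unfold setupInd
    split_ifs with a b
    · exact le_refl _
    · exact absurd (lt_of_lt_of_le a (hy'le t)) b
    · norm_num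
    · exact le_refl _
  have hBle : ∀ t, t ≤ T → BSeq p h s c R TL y v 1 B0 t ≤ BSeq p h s c R TL y' v 1 B0 t := by
    intro t ht
    rw [BSeq_eq_sum p h s c R TL y v (le_refl 1) B0 t,
      BSeq_eq_sum p h s c R TL y' v (le_refl 1) B0 t]
    have : ∀ j ∈ Finset.Icc 1 t, per p h s c R TL y v 1 j ≤ per p h s c R TL y' v 1 j := by
      intro j hj
      simp only [Finset.mem_Icc] at hj
      unfold per
      have e1 : h j * ISeq y' v 1 j ≤ h j * ISeq y v 1 j :=
        mul_le_mul_of_nonneg_left (hI'le j hj.1 (le_trans hj.2 ht)) (hh j)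
      have e2 : s j * setupInd (y' j) ≤ s j * setupInd (y j) :=
        mul_le_mul_of_nonneg_left (hsetup j) (hs j)
      have e3 : c j * y' j ≤ c j * y j := mul_le_mul_of_nonneg_left (hy'le j) (hc j)
      linarith
    have := Finset.sum_le_sum this
    linarith
  refine ⟨y', ?_, ?_, hBle T (le_refl T)⟩
  · intro t h1 h2
    obtain ⟨a1, a2, a3, a4, a5, a6⟩ := hf t h1 h2
    have e2 : s t * setupInd (y' t) ≤ s t * setupInd (y t) :=
      mul_le_mul_of_nonneg_left (hsetup t) (hs t)
    have e3 : c t * y' t ≤ c t * y t := mul_le_mul_of_nonneg_left (hy'le t) (hc t)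
    have e4 := hBle (t - 1) (by omega)
    have e5 := hBle t h2
    exact ⟨hy'nn t h1 h2, a2, a3, hI'nn t h1 h2, by linarith, by linarith⟩
  · rw [hI' T hT (le_refl T)]
    have h1 : V ≤ Y T := by
      have := hYIle T hT (le_refl T)
      simpa [hV] using this
    rw [min_eq_right h1]
    simp [hV]
noncomputable def chiF (σ : Finset ℕ) (j : ℕ) : ℝ := if j ∈ σ then 1 else 0

noncomputable def Bchi (p h s c : ℕ → ℝ) (R : ℝ) (TL : ℕ) (σ : Finset ℕ)
    (y v : ℕ → ℝ) (m : ℕ) (B : ℝ) (t : ℕ) : ℝ :=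
  B + ∑ j ∈ Finset.Icc m t,
    (p j * v j - h j * ISeq y v m j - s j * chiF σ j - c j * y j
      - (if j = TL then R else 0))

lemma chiF_nonneg (σ : Finset ℕ) (j : ℕ) : 0 ≤ chiF σ j := by
  unfold chiF; split_ifs <;> norm_num

/-- If the pattern matches the true setups on the window, `Bchi = BSeq`. -/
lemma Bchi_eq_BSeq {p h s c : ℕ → ℝ} {R : ℝ} {TL : ℕ} {σ : Finset ℕ} {y v : ℕ → ℝ}
    {m : ℕ} (hm : 1 ≤ m) (B : ℝ) (t : ℕ)
    (hpat : ∀ j ∈ Finset.Icc m t, chiF σ j = setupInd (y j)) :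
    Bchi p h s c R TL σ y v m B t = BSeq p h s c R TL y v m B t := by
  rw [BSeq_eq_sum p h s c R TL y v hm B t]
  unfold Bchi
  congr 1
  refine Finset.sum_congr rfl fun j hj => ?_
  rw [hpat j hj]; unfold per; ring

/-- If `y` vanishes off the pattern, the true capital dominates the pattern capital. -/
lemma Bchi_le_BSeq {p h s c : ℕ → ℝ} {R : ℝ} {TL : ℕ} {σ : Finset ℕ} {y v : ℕ → ℝ}
    {m : ℕ} (hm : 1 ≤ m) (hs : ∀ t, 0 ≤ s t) (B : ℝ) (t : ℕ)
    (hpat : ∀ j ∈ Finset.Icc m t, j ∉ σ → y j = 0) :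
    Bchi p h s c R TL σ y v m B t ≤ BSeq p h s c R TL y v m B t := by
  rw [BSeq_eq_sum p h s c R TL y v hm B t]
  unfold Bchi per
  have : ∀ j ∈ Finset.Icc m t, s j * setupInd (y j) ≤ s j * chiF σ j := by
    intro j hj
    by_cases hσ : j ∈ σ
    · unfold chiF; rw [if_pos hσ]
      exact mul_le_mul_of_nonneg_left (setupInd_le_one _) (hs j)
    · rw [hpat j hj hσ]; unfold setupInd chiF
      rw [if_neg (lt_irrefl 0), if_neg hσ]
  have hsum : ∑ j ∈ Finset.Icc m t,
      (p j * v j - h j * ISeq y v m j - s j * chiF σ j - c j * y j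
        - (if j = TL then R else 0)) ≤
      ∑ j ∈ Finset.Icc m t,
      (p j * v j - h j * ISeq y v m j - s j * setupInd (y j) - c j * y j
        - (if j = TL then R else 0)) := by
    refine Finset.sum_le_sum fun j hj => ?_
    have := this j hj; linarith
  linarith

/-- chi-feasibility (pattern-relaxed feasibility) as a set of plan pairs. -/
def FeasChi (d p c h s : ℕ → ℝ) (R : ℝ) (TL : ℕ) (σ : Finset ℕ) (m n : ℕ) (B : ℝ) :
    Set ((ℕ → ℝ) × (ℕ → ℝ)) :=
  {z | (∀ t, m ≤ t → t ≤ n →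
      0 ≤ z.1 t ∧ 0 ≤ z.2 t ∧ z.2 t ≤ d t ∧ 0 ≤ ISeq z.1 z.2 m t ∧
      s t * chiF σ t + c t * z.1 t ≤ Bchi p h s c R TL σ z.1 z.2 m B (t - 1) ∧
      0 ≤ Bchi p h s c R TL σ z.1 z.2 m B t ∧ (t ∉ σ → z.1 t = 0)) ∧
    ISeq z.1 z.2 m n = 0}

/-- A chi-feasible point is genuinely feasible with at least the pattern value. -/
lemma FeasChi_to_Feasible {d p c h s : ℕ → ℝ} {R : ℝ} {TL : ℕ} {σ : Finset ℕ}
    {m n : ℕ} (hm : 1 ≤ m) (hσ : σ ⊆ Finset.Icc m n) (hs : ∀ t, 0 ≤ s t) {B : ℝ}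
    {z : (ℕ → ℝ) × (ℕ → ℝ)} (hz : z ∈ FeasChi d p c h s R TL σ m n B) :
    FeasibleSeg m n d p c h s R TL B z.1 z.2 ∧ ISeq z.1 z.2 m n = 0 ∧
      Bchi p h s c R TL σ z.1 z.2 m B n ≤ BSeq p h s c R TL z.1 z.2 m B n := by
  obtain ⟨hcon, hI⟩ := hz
  have hpat : ∀ u : ℕ, ∀ j ∈ Finset.Icc m u, j ≤ n → (j ∉ σ → z.1 j = 0) := by
    intro u j hj hjn hjσ
    simp only [Finset.mem_Icc] at hj
    exact (hcon j hj.1 hjn).2.2.2.2.2.2 hjσ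
  have hble : ∀ u, u ≤ n → Bchi p h s c R TL σ z.1 z.2 m B u ≤
      BSeq p h s c R TL z.1 z.2 m B u := by
    intro u hu
    refine Bchi_le_BSeq hm hs B u fun j hj hjσ => ?_
    simp only [Finset.mem_Icc] at hj
    exact hpat u j (by simp only [Finset.mem_Icc]; omega) (by omega) hjσ
  refine ⟨?_, hI, hble n (le_refl n)⟩
  intro t ht1 ht2
  obtain ⟨a1, a2, a3, a4, a5, a6, a7⟩ := hcon t ht1 ht2
  have hst : s t * setupInd (z.1 t) ≤ s t * chiF σ t := by
    by_cases hσt : t ∈ σ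
    · unfold chiF; rw [if_pos hσt]
      exact mul_le_mul_of_nonneg_left (setupInd_le_one _) (hs t)
    · rw [a7 hσt]; unfold setupInd chiF
      rw [if_neg (lt_irrefl 0), if_neg hσt]
  have e1 := hble (t - 1) (by omega)
  have e2 := hble t ht2
  exact ⟨a1, a2, a3, a4, by linarith, by linarith⟩
def Kset (d : ℕ → ℝ) (m n : ℕ) (M : ℝ) : Set ((ℕ → ℝ) × (ℕ → ℝ)) :=
  (Set.univ.pi fun t => if t ∈ Finset.Icc m n then Set.Icc 0 M else ({0} : Set ℝ)) ×ˢ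
  (Set.univ.pi fun t => if t ∈ Finset.Icc m n then Set.Icc 0 (d t) else ({0} : Set ℝ))

lemma Kset_compact (d : ℕ → ℝ) (m n : ℕ) (M : ℝ) : IsCompact (Kset d m n M) := by
  refine IsCompact.prod ?_ ?_ <;>
    refine isCompact_univ_pi fun t => ?_ <;>
    · split_ifs
      · exact isCompact_Icc
      · exact isCompact_singleton

open scoped Classical in
lemma Feasible_to_FeasChi {d p c h s : ℕ → ℝ} {R : ℝ} {TL : ℕ} {m n : ℕ} {c0 : ℝ}
    (hm : 1 ≤ m)
    (hp : ∀ t, 0 ≤ p t) (hh : ∀ t, 0 ≤ h t) (hs : ∀ t, 0 ≤ s t) (hd : ∀ t, 0 ≤ d t)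
    (hR : 0 ≤ R) (hceq : ∀ t, c t = c0) (hc0 : 0 < c0) {B : ℝ} {y v : ℕ → ℝ}
    (hf : FeasibleSeg m n d p c h s R TL B y v) (hI : ISeq y v m n = 0) :
    ∃ σ : Finset ℕ, σ ⊆ Finset.Icc m n ∧ ∃ z,
      z ∈ FeasChi d p c h s R TL σ m n B ∧
      z ∈ Kset d m n (max 0 ((B + ∑ j ∈ Finset.Icc m n, p j * d j) / c0)) ∧
      Bchi p h s c R TL σ z.1 z.2 m B n = BSeq p h s c R TL y v m B n := by
  have hc : ∀ t, 0 ≤ c t := fun t => by rw [hceq t]; exact le_of_lt hc0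
  set P : ℝ := ∑ j ∈ Finset.Icc m n, p j * d j with hP
  set M : ℝ := max 0 ((B + P) / c0) with hM
  set σ : Finset ℕ := (Finset.Icc m n).filter (fun t => 0 < y t) with hσ
  set y' : ℕ → ℝ := fun t => if t ∈ Finset.Icc m n then y t else 0 with hy'
  set v' : ℕ → ℝ := fun t => if t ∈ Finset.Icc m n then v t else 0 with hv'
  have hagree : ∀ u, u ≤ n → ∀ j ∈ Finset.Icc m u, y' j = y j ∧ v' j = v j := by
    intro u hu j hj
    simp only [Finset.mem_Icc] at hj
    have : j ∈ Finset.Icc m n := by simp only [Finset.mem_Icc]; omega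
    constructor
    · show (if j ∈ Finset.Icc m n then y j else 0) = y j
      rw [if_pos this]
    · show (if j ∈ Finset.Icc m n then v j else 0) = v j
      rw [if_pos this]
  have hIeq : ∀ u, u ≤ n → ISeq y' v' m u = ISeq y v m u := by
    intro u hu
    exact ISeq_congr (fun j hj => (hagree u hu j hj).1) (fun j hj => (hagree u hu j hj).2)
  have hBeq : ∀ u, u ≤ n → BSeq p h s c R TL y' v' m B u = BSeq p h s c R TL y v m B u := by
    intro u hu
    exact BSeq_congr p h s c R TL hm B u
      (fun j hj => (hagree u hu j hj).1) (fun j hj => (hagree u hu j hj).2)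
  have hyeq : ∀ t, m ≤ t → t ≤ n → y' t = y t ∧ v' t = v t := by
    intro t h1 h2
    have : t ∈ Finset.Icc m n := by simp only [Finset.mem_Icc]; omega
    constructor
    · show (if t ∈ Finset.Icc m n then y t else 0) = y t
      rw [if_pos this]
    · show (if t ∈ Finset.Icc m n then v t else 0) = v t
      rw [if_pos this]
  have hpat : ∀ u, u ≤ n → ∀ j ∈ Finset.Icc m u, chiF σ j = setupInd (y' j) := by
    intro u hu j hj
    simp only [Finset.mem_Icc] at hj
    have hjn : j ∈ Finset.Icc m n := by simp only [Finset.mem_Icc]; omega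
    have := (hyeq j hj.1 (by omega)).1
    unfold chiF setupInd
    rw [this]
    simp only [hσ, Finset.mem_filter, hjn, true_and]
  have hBchi : ∀ u, u ≤ n → Bchi p h s c R TL σ y' v' m B u =
      BSeq p h s c R TL y v m B u := by
    intro u hu
    rw [Bchi_eq_BSeq hm B u (hpat u hu), hBeq u hu]
  have hz1 : ((y', v') : (ℕ → ℝ) × (ℕ → ℝ)).1 = y' := rfl
  have hz2 : ((y', v') : (ℕ → ℝ) × (ℕ → ℝ)).2 = v' := rfl
  refine ⟨σ, Finset.filter_subset _ _, (y', v'), ⟨?_, ?_⟩, ?_, hBchi n (le_refl n)⟩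
  · -- FeasChi constraints
    intro t ht1 ht2
    simp only [hz1, hz2]
    obtain ⟨a1, a2, a3, a4, a5, a6⟩ := hf t ht1 ht2
    obtain ⟨ey, ev⟩ := hyeq t ht1 ht2
    have htIcc : t ∈ Finset.Icc m n := by simp only [Finset.mem_Icc]; omega
    have hchit : chiF σ t = setupInd (y t) := by
      have := hpat t ht2 t (by simp only [Finset.mem_Icc]; omega)
      rw [this, ey]
    refine ⟨by rw [ey]; exact a1, by rw [ev]; exact a2, by rw [ev]; exact a3,
      by rw [hIeq t ht2]; exact a4, ?_, ?_, ?_⟩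
    · rw [hBchi (t-1) (by omega), hchit, ey]; exact a5
    · rw [hBchi t ht2]; exact a6
    · intro hσt
      rw [ey]
      by_contra hyt
      exact hσt (by simp only [hσ, Finset.mem_filter]; exact ⟨htIcc, lt_of_le_of_ne a1 (Ne.symm hyt)⟩)
  · rw [hIeq n (le_refl n)]; exact hI
  · -- Kset membership
    constructor
    · intro t _
      simp only [hz1]
      by_cases htIcc : t ∈ Finset.Icc m n
      · rw [if_pos htIcc]
        simp only [Finset.mem_Icc] at htIcc
        obtain ⟨a1, _, _, _, a5, _⟩ := hf t htIcc.1 htIcc.2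
        obtain ⟨ey, _⟩ := hyeq t htIcc.1 htIcc.2
        have hcap : BSeq p h s c R TL y v m B (t - 1) ≤ B + P :=
          BSeq_le_cap hm hp hh hs hc hd hR hf (by omega)
        have hsnn : 0 ≤ s t * setupInd (y t) := mul_nonneg (hs t) (setupInd_nonneg _)
        have hcy : c0 * y t ≤ B + P := by rw [← hceq t]; linarith
        have hyM : y t ≤ (B + P) / c0 := by
          rw [le_div_iff₀ hc0]; linarith [hcy]
        rw [Set.mem_Icc, ey]
        exact ⟨a1, le_trans hyM (le_max_right _ _)⟩
      · rw [if_neg htIcc]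
        have hy0 : y' t = 0 := by
          show (if t ∈ Finset.Icc m n then y t else 0) = 0
          rw [if_neg htIcc]
        simp [hy0]
    · intro t _
      simp only [hz2]
      by_cases htIcc : t ∈ Finset.Icc m n
      · rw [if_pos htIcc]
        simp only [Finset.mem_Icc] at htIcc
        obtain ⟨_, a2, a3, _, _, _⟩ := hf t htIcc.1 htIcc.2
        obtain ⟨_, ev⟩ := hyeq t htIcc.1 htIcc.2
        rw [Set.mem_Icc, ev]
        exact ⟨a2, a3⟩
      · rw [if_neg htIcc]
        have hv0 : v' t = 0 := by
          show (if t ∈ Finset.Icc m n then v t else 0) = 0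
          rw [if_neg htIcc]
        simp [hv0]
lemma continuous_ISeqZ (m t : ℕ) :
    Continuous fun z : (ℕ → ℝ) × (ℕ → ℝ) => ISeq z.1 z.2 m t := by
  unfold ISeq
  exact continuous_finset_sum _ fun j _ =>
    ((continuous_apply j).comp continuous_fst).sub ((continuous_apply j).comp continuous_snd)

lemma continuous_BchiZ (p h s c : ℕ → ℝ) (R : ℝ) (TL : ℕ) (σ : Finset ℕ) (m : ℕ)
    (B : ℝ) (t : ℕ) :
    Continuous fun z : (ℕ → ℝ) × (ℕ → ℝ) => Bchi p h s c R TL σ z.1 z.2 m B t := by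
  unfold Bchi
  refine continuous_const.add (continuous_finset_sum _ fun j _ => ?_)
  exact ((((continuous_const.mul ((continuous_apply j).comp continuous_snd)).sub
    (continuous_const.mul (continuous_ISeqZ m j))).sub continuous_const).sub
    (continuous_const.mul ((continuous_apply j).comp continuous_fst))).sub continuous_const

lemma FeasChi_closed (d p c h s : ℕ → ℝ) (R : ℝ) (TL : ℕ) (σ : Finset ℕ) (m n : ℕ)
    (B : ℝ) : IsClosed (FeasChi d p c h s R TL σ m n B) := by
  have hrep : FeasChi d p c h s R TL σ m n B =
      (⋂ t ∈ {t : ℕ | m ≤ t ∧ t ≤ n},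
        ({z : (ℕ → ℝ) × (ℕ → ℝ) | 0 ≤ z.1 t} ∩ {z | 0 ≤ z.2 t} ∩ {z | z.2 t ≤ d t} ∩
         {z | 0 ≤ ISeq z.1 z.2 m t} ∩
         {z | s t * chiF σ t + c t * z.1 t ≤ Bchi p h s c R TL σ z.1 z.2 m B (t - 1)} ∩
         {z | 0 ≤ Bchi p h s c R TL σ z.1 z.2 m B t} ∩ {z | t ∉ σ → z.1 t = 0})) ∩
      {z | ISeq z.1 z.2 m n = 0} := by
    ext z
    simp only [FeasChi, Set.mem_setOf_eq, Set.mem_inter_iff, Set.mem_iInter]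
    constructor
    · rintro ⟨hcon, hI⟩
      refine ⟨fun t ht => ?_, hI⟩
      obtain ⟨a1, a2, a3, a4, a5, a6, a7⟩ := hcon t ht.1 ht.2
      exact ⟨⟨⟨⟨⟨⟨a1, a2⟩, a3⟩, a4⟩, a5⟩, a6⟩, a7⟩
    · rintro ⟨hcon, hI⟩
      refine ⟨fun t ht1 ht2 => ?_, hI⟩
      obtain ⟨⟨⟨⟨⟨⟨a1, a2⟩, a3⟩, a4⟩, a5⟩, a6⟩, a7⟩ := hcon t ⟨ht1, ht2⟩
      exact ⟨a1, a2, a3, a4, a5, a6, a7⟩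
  rw [hrep]
  have c1 : ∀ t : ℕ, Continuous fun z : (ℕ → ℝ) × (ℕ → ℝ) => z.1 t :=
    fun t => (continuous_apply t).comp continuous_fst
  have c2 : ∀ t : ℕ, Continuous fun z : (ℕ → ℝ) × (ℕ → ℝ) => z.2 t :=
    fun t => (continuous_apply t).comp continuous_snd
  refine IsClosed.inter ?_ (isClosed_eq (continuous_ISeqZ m n) continuous_const)
  refine isClosed_biInter fun t ht => ?_
  refine IsClosed.inter (IsClosed.inter (IsClosed.inter (IsClosed.inter (IsClosed.inter
    (IsClosed.inter ?_ ?_) ?_) ?_) ?_) ?_) ?_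
  · exact isClosed_le continuous_const (c1 t)
  · exact isClosed_le continuous_const (c2 t)
  · exact isClosed_le (c2 t) continuous_const
  · exact isClosed_le continuous_const (continuous_ISeqZ m t)
  · exact isClosed_le (continuous_const.add (continuous_const.mul (c1 t)))
      (continuous_BchiZ p h s c R TL σ m B (t - 1))
  · exact isClosed_le continuous_const (continuous_BchiZ p h s c R TL σ m B t)
  · by_cases hσt : t ∈ σ
    · simp only [hσt, not_true_eq_false, false_implies, Set.setOf_true]
      exact isClosed_univ
    · simp only [hσt, not_false_eq_true, true_implies]
      exact isClosed_eq (c1 t) continuous_const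

open scoped Classical in
lemma BB_attained {d p c h s : ℕ → ℝ} {R : ℝ} {TL : ℕ} {m n : ℕ} {c0 : ℝ}
    (hm : 1 ≤ m)
    (hp : ∀ t, 0 ≤ p t) (hh : ∀ t, 0 ≤ h t) (hs : ∀ t, 0 ≤ s t) (hd : ∀ t, 0 ≤ d t)
    (hR : 0 ≤ R) (hceq : ∀ t, c t = c0) (hc0 : 0 < c0) (B : ℝ)
    (hne : BB d p c h s R TL m n B ≠ ⊥) :
    ∃ y v : ℕ → ℝ, FeasibleSeg m n d p c h s R TL B y v ∧ ISeq y v m n = 0 ∧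
      BB d p c h s R TL m n B = ((BSeq p h s c R TL y v m B n - B : ℝ) : EReal) := by
  set A : Set EReal := {x : EReal | ∃ y v : ℕ → ℝ,
    FeasibleSeg m n d p c h s R TL B y v ∧ ISeq y v m n = 0 ∧
    x = ((BSeq p h s c R TL y v m B n - B : ℝ) : EReal)} with hA
  have hBBA : BB d p c h s R TL m n B = sSup A := rfl
  have hAne : A.Nonempty := by
    by_contra hemp
    rw [Set.not_nonempty_iff_eq_empty] at hemp
    rw [hBBA, hemp, sSup_empty] at hne
    exact hne rfl
  obtain ⟨x0, y0, v0, hf0, hI0, hx0⟩ := hAne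
  set M : ℝ := max 0 ((B + ∑ j ∈ Finset.Icc m n, p j * d j) / c0) with hMdef
  set K : Set ((ℕ → ℝ) × (ℕ → ℝ)) := Kset d m n M with hK
  set G : Finset ℕ → Set ((ℕ → ℝ) × (ℕ → ℝ)) :=
    fun σ => K ∩ FeasChi d p c h s R TL σ m n B with hG
  set g : Finset ℕ → ((ℕ → ℝ) × (ℕ → ℝ)) → ℝ :=
    fun σ z => Bchi p h s c R TL σ z.1 z.2 m B n with hg
  have hGcompact : ∀ σ, IsCompact (G σ) :=
    fun σ => (Kset_compact d m n M).inter_right (FeasChi_closed d p c h s R TL σ m n B)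
  set pow' : Finset (Finset ℕ) :=
    (Finset.Icc m n).powerset.filter (fun σ => (G σ).Nonempty) with hpow
  have hmem_pow : ∀ σ ∈ pow', σ ⊆ Finset.Icc m n ∧ (G σ).Nonempty := by
    intro σ hσ
    simp only [hpow, Finset.mem_filter, Finset.mem_powerset] at hσ
    exact hσ
  have hmax : ∀ σ, σ ∈ pow' → ∃ z, z ∈ G σ ∧ ∀ w ∈ G σ, g σ w ≤ g σ z := by
    intro σ hσ
    obtain ⟨zz, hzz⟩ := (hmem_pow σ hσ).2
    obtain ⟨z, hz1, hz2⟩ := (hGcompact σ).exists_isMaxOn ⟨zz, hzz⟩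
      (continuous_BchiZ p h s c R TL σ m B n).continuousOn
    exact ⟨z, hz1, fun w hw => hz2 hw⟩
  choose Z hZmem hZmax using hmax
  -- embed any genuinely feasible plan into some G σ
  have hembed : ∀ y v : ℕ → ℝ, FeasibleSeg m n d p c h s R TL B y v →
      ISeq y v m n = 0 → ∃ σ ∈ pow', ∃ z ∈ G σ,
        g σ z = BSeq p h s c R TL y v m B n := by
    intro y v hf hI
    obtain ⟨σ, hσsub, z, hzchi, hzK, hzval⟩ :=
      Feasible_to_FeasChi hm hp hh hs hd hR hceq hc0 hf hI
    have hzG : z ∈ G σ := ⟨hzK, hzchi⟩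
    have hσpow : σ ∈ pow' := by
      simp only [hpow, Finset.mem_filter, Finset.mem_powerset]
      exact ⟨hσsub, ⟨z, hzG⟩⟩
    exact ⟨σ, hσpow, z, hzG, hzval⟩
  have hpow_ne : pow'.Nonempty := by
    obtain ⟨σ, hσ, _⟩ := hembed y0 v0 hf0 hI0
    exact ⟨σ, hσ⟩
  set W : Finset ℕ → ℝ := fun σ => if hσ : σ ∈ pow' then g σ (Z σ hσ) else 0 with hW
  obtain ⟨σs, hσs, hσsmax⟩ := Finset.exists_max_image pow' W hpow_ne
  set zs := Z σs hσs with hzs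
  have hzsG : zs ∈ G σs := hZmem σs hσs
  obtain ⟨hfs, hIs, hgs⟩ := FeasChi_to_Feasible hm (hmem_pow σs hσs).1 hs hzsG.2
  refine ⟨zs.1, zs.2, hfs, hIs, ?_⟩
  rw [hBBA]
  apply le_antisymm
  · refine sSup_le ?_
    rintro x ⟨y, v, hf, hI, rfl⟩
    rw [EReal.coe_le_coe_iff]
    obtain ⟨σ1, hσ1, z1, hz1G, hz1val⟩ := hembed y v hf hI
    have e1 : BSeq p h s c R TL y v m B n ≤ g σ1 (Z σ1 hσ1) := by
      rw [← hz1val]; exact hZmax σ1 hσ1 z1 hz1G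
    have e2 : W σ1 ≤ W σs := hσsmax σ1 hσ1
    have e3 : W σ1 = g σ1 (Z σ1 hσ1) := dif_pos hσ1
    have e4 : W σs = g σs zs := dif_pos hσs
    have e5 : g σs zs ≤ BSeq p h s c R TL zs.1 zs.2 m B n := hgs
    have : BSeq p h s c R TL y v m B n ≤ BSeq p h s c R TL zs.1 zs.2 m B n := by
      rw [e3] at e2; rw [e4] at e2; linarith
    linarith
  · exact le_sSup ⟨zs.1, zs.2, hfs, hIs, rfl⟩
theorem stmt0 (T : ℕ) (hT : 1 ≤ T) (d p c h s : ℕ → ℝ) (c0 : ℝ)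
    (hceq : ∀ t, c t = c0) (hc0 : 0 < c0)
    (hd : ∀ t, 0 ≤ d t) (hp : ∀ t, 0 ≤ p t) (hh : ∀ t, 0 ≤ h t)
    (hs : ∀ t, 0 ≤ s t)
    (B0 R : ℝ) (hB0 : 0 ≤ B0) (hR : 0 ≤ R)
    (TL : ℕ) (hTL1 : 1 ≤ TL) (hTL2 : TL ≤ T)
    (Bstar : ℕ → EReal) (hBstar0 : Bstar 0 = (B0 : EReal))
    (hrec : ∀ n, 1 ≤ n → n ≤ T →
      Bstar n = ⨆ m ∈ Finset.Icc 1 n,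
        (Bstar (m - 1) + BB d p c h s R TL m n (Bstar (m - 1)).toReal)) :
    Bstar T = sSup {x : EReal | ∃ y v : ℕ → ℝ,
      FeasibleSeg 1 T d p c h s R TL B0 y v ∧
      x = ((BSeq p h s c R TL y v 1 B0 T : ℝ) : EReal)} := by
  have hc : ∀ t, 0 ≤ c t := fun t => by rw [hceq t]; exact le_of_lt hc0
  apply le_antisymm
  · -- Bstar T ≤ sSup S, via strong induction claim
    have key : ∀ n, n ≤ T → Bstar n = ⊥ ∨ ∃ y v : ℕ → ℝ,
        FeasibleSeg 1 n d p c h s R TL B0 y v ∧ ISeq y v 1 n = 0 ∧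
        Bstar n ≤ ((BSeq p h s c R TL y v 1 B0 n : ℝ) : EReal) := by
      intro n
      induction n using Nat.strong_induction_on with
      | _ n ih =>
        intro hnT
        rcases Nat.eq_zero_or_pos n with rfl | hn
        · right
          refine ⟨fun _ => 0, fun _ => 0, fun t ht1 ht2 => absurd ht2 (by omega), ?_, ?_⟩
          · unfold ISeq; rw [Finset.Icc_eq_empty (by omega)]; simp
          · rw [hBstar0]
            exact le_of_eq rfl
        · rw [hrec n hn hnT]
          have hne : (Finset.Icc 1 n).Nonempty := ⟨1, by simp only [Finset.mem_Icc]; omega⟩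
          obtain ⟨mo, hmo, hmomax⟩ := Finset.exists_max_image (Finset.Icc 1 n)
            (fun m => Bstar (m - 1) + BB d p c h s R TL m n (Bstar (m - 1)).toReal) hne
          simp only [Finset.mem_Icc] at hmo
          have hsup : (⨆ m ∈ Finset.Icc 1 n,
              (Bstar (m - 1) + BB d p c h s R TL m n (Bstar (m - 1)).toReal)) =
              Bstar (mo - 1) + BB d p c h s R TL mo n (Bstar (mo - 1)).toReal := by
            apply le_antisymm
            · exact iSup₂_le fun m hm => hmomax m hm
            · exact le_iSup₂ (f := fun m (_ : m ∈ Finset.Icc 1 n) =>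
                Bstar (m - 1) + BB d p c h s R TL m n (Bstar (m - 1)).toReal) mo
                (by simp only [Finset.mem_Icc]; omega)
          rw [hsup]
          by_cases hb1 : Bstar (mo - 1) = ⊥
          · left; rw [hb1, EReal.bot_add]
          · by_cases hb2 : BB d p c h s R TL mo n (Bstar (mo - 1)).toReal = ⊥
            · left; rw [hb2, EReal.add_bot]
            · right
              rcases ih (mo - 1) (by omega) (by omega) with hbot' | ⟨y1, v1, hf1, hI1, hle1⟩
              · exact absurd hbot' hb1
              set B' : ℝ := BSeq p h s c R TL y1 v1 1 B0 (mo - 1) with hB'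
              have htop : Bstar (mo - 1) ≠ ⊤ := by
                intro hcon
                rw [hcon] at hle1
                exact (EReal.coe_ne_top B') (top_le_iff.mp hle1)
              set b : ℝ := (Bstar (mo - 1)).toReal with hb
              have hbreal : b ≤ B' := by
                have := EReal.toReal_le_toReal hle1 hb1 (EReal.coe_ne_top B')
                rwa [EReal.toReal_coe] at this
              obtain ⟨y2, v2, hf2, hI2, hBBval⟩ := BB_attained (by omega : 1 ≤ mo)
                hp hh hs hd hR hceq hc0 b hb2
              have hf2' : FeasibleSeg mo n d p c h s R TL B' y2 v2 :=
                FeasibleSeg_mono hbreal hf2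
              obtain ⟨y, v, hfc, hIc, hBc⟩ := concat (by omega : 1 ≤ mo) hf1 hI1 hf2'
              refine ⟨y, v, hfc, by rw [hIc n (by omega)]; exact hI2, ?_⟩
              have hshift : BSeq p h s c R TL y2 v2 mo B' n =
                  BSeq p h s c R TL y2 v2 mo b n + (B' - b) := by
                rw [← BSeq_shift p h s c R TL y2 v2 mo b (B' - b) n]; congr 1; ring
              have hval : BSeq p h s c R TL y v 1 B0 n =
                  B' + (BSeq p h s c R TL y2 v2 mo b n - b) := by
                rw [hBc n (by omega), hshift]; ring
              calc Bstar (mo - 1) + BB d p c h s R TL mo n b ≤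
                  ((B' : ℝ) : EReal) + ((BSeq p h s c R TL y2 v2 mo b n - b : ℝ) : EReal) :=
                    add_le_add hle1 (le_of_eq hBBval)
                _ = ((B' + (BSeq p h s c R TL y2 v2 mo b n - b) : ℝ) : EReal) := by
                    rw [← EReal.coe_add]
                _ = ((BSeq p h s c R TL y v 1 B0 n : ℝ) : EReal) := by rw [hval]
    rcases key T (le_refl T) with hbot | ⟨y, v, hfc, _, hle⟩
    · rw [hbot]; exact bot_le
    · exact le_trans hle (le_sSup ⟨y, v, hfc, rfl⟩)
  · -- sSup S ≤ Bstar T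
    refine sSup_le ?_
    rintro x ⟨y, v, hf, rfl⟩
    obtain ⟨y', hf', hI', hval⟩ := trim hT hh hs hc hf
    have h1 : ((BSeq p h s c R TL y v 1 B0 T : ℝ) : EReal) ≤
        ((BSeq p h s c R TL y' v 1 B0 T : ℝ) : EReal) := EReal.coe_le_coe_iff.mpr hval
    have h2 : ((BSeq p h s c R TL y' v 1 B0 T - B0 : ℝ) : EReal) ≤
        BB d p c h s R TL 1 T B0 := le_sSup ⟨y', v, hf', hI', rfl⟩
    have h3 : ((BSeq p h s c R TL y' v 1 B0 T : ℝ) : EReal) ≤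
        ((B0 : ℝ) : EReal) + BB d p c h s R TL 1 T B0 := by
      calc ((BSeq p h s c R TL y' v 1 B0 T : ℝ) : EReal) =
          ((B0 : ℝ) : EReal) + ((BSeq p h s c R TL y' v 1 B0 T - B0 : ℝ) : EReal) := by
            rw [← EReal.coe_add]; norm_num
        _ ≤ ((B0 : ℝ) : EReal) + BB d p c h s R TL 1 T B0 := add_le_add le_rfl h2
    have h4 : ((B0 : ℝ) : EReal) + BB d p c h s R TL 1 T B0 ≤ Bstar T := by
      rw [hrec T hT (le_refl T)]
      have hmem : (1 : ℕ) ∈ Finset.Icc 1 T := by simp only [Finset.mem_Icc]; omega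
      have := le_iSup₂ (f := fun m (_ : m ∈ Finset.Icc 1 T) =>
        Bstar (m - 1) + BB d p c h s R TL m T (Bstar (m - 1)).toReal) 1 hmem
      simp only [Nat.sub_self, hBstar0, EReal.toReal_coe] at this
      exact this
    exact le_trans h1 (le_trans h3 h4)
end

section
/- Assume all unit production costs are equal: c_t = c > 0 for every t. For every feasible plan (y, v) there exists a feasible plan (ŷ, v) with the same realized-sales sequence v such that Î_t · ŷ_{t+1} = 0 for every t = 1,…,T−1 (zero-inventory ordering) and whose final capital satisfies B̂_T ≥ B_T. -/
open Classical in
noncomputable def gfun (T : ℕ) (y : ℕ → ℝ) (t : ℕ) : ℕ :=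
  if h : ∃ j, t < j ∧ j ≤ T ∧ 0 < y j then Nat.find h - 1 else T

open Classical in
lemma gfun_spec (T : ℕ) (y : ℕ → ℝ) (t : ℕ) (ht : t ≤ T) :
    t ≤ gfun T y t ∧ gfun T y t ≤ T ∧ (∀ j, t < j → j ≤ gfun T y t → ¬ 0 < y j) ∧
    (gfun T y t = T ∨ 0 < y (gfun T y t + 1)) := by
  unfold gfun
  split
  · next hex =>
    obtain ⟨ha, hb, hc⟩ := Nat.find_spec hex
    refine ⟨by omega, by omega, ?_, Or.inr ?_⟩
    · intro j hj1 hj2 hyj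
      exact Nat.find_min hex (by omega) ⟨hj1, by omega, hyj⟩
    · have h5 : Nat.find hex - 1 + 1 = Nat.find hex := by omega
      rw [h5]; exact hc
  · next hex =>
    refine ⟨ht, le_rfl, ?_, Or.inl rfl⟩
    intro j hj1 hj2 hyj
    exact hex ⟨j, hj1, hj2, hyj⟩

lemma gfun_unique (T : ℕ) (y : ℕ → ℝ) (t : ℕ) (ht : t ≤ T) (r : ℕ)
    (h1 : t ≤ r) (h2 : r ≤ T) (h3 : ∀ j, t < j → j ≤ r → ¬ 0 < y j)
    (h4 : r = T ∨ 0 < y (r + 1)) : gfun T y t = r := by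
  obtain ⟨g1, g2, g3, g4⟩ := gfun_spec T y t ht
  by_contra hne
  rcases Nat.lt_or_ge (gfun T y t) r with hlt | hge
  · rcases g4 with hT | hy
    · omega
    · exact h3 _ (by omega) (by omega) hy
  · have hlt : r < gfun T y t := by omega
    rcases h4 with hT | hy
    · omega
    · exact g3 _ (by omega) (by omega) hy

lemma sum_Icc_one_split (f : ℕ → ℝ) {a b : ℕ} (hab : a ≤ b) :
    ∑ j ∈ Finset.Icc 1 b, f j = (∑ j ∈ Finset.Icc 1 a, f j) + ∑ j ∈ Finset.Ioc a b, f j := by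
  have h1 : Finset.Icc 1 b = Finset.Ioc 0 b := Finset.Icc_add_one_left_eq_Ioc 0 b
  have h2 : Finset.Icc 1 a = Finset.Ioc 0 a := Finset.Icc_add_one_left_eq_Ioc 0 a
  rw [h1, h2, Finset.sum_Ioc_consecutive f (Nat.zero_le a) hab]

lemma telescope (f : ℕ → ℝ) : ∀ t, ∑ j ∈ Finset.Icc 1 t, (f j - f (j - 1)) = f t - f 0
  | 0 => by simp
  | n + 1 => by
    rw [Finset.sum_Icc_succ_top (by omega : 1 ≤ n + 1), telescope f n]
    simp

lemma BSeq_succ (p h s c : ℕ → ℝ) (R : ℝ) (TL : ℕ) (y v : ℕ → ℝ) (B0 : ℝ) (t : ℕ) :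
    BSeq p h s c R TL y v 1 B0 (t + 1)
      = BSeq p h s c R TL y v 1 B0 t + p (t + 1) * v (t + 1)
        - h (t + 1) * ISeq y v 1 (t + 1)
        - s (t + 1) * setupInd (y (t + 1))
        - c (t + 1) * y (t + 1)
        - (if t + 1 = TL then R else 0) := by
  rw [BSeq]
  simp

/-- every feasible plan is (weakly) dominated by a feasible plan with the
same realized sales satisfying the zero-inventory-ordering property. -/
theorem stmt2 (T : ℕ) (hT : 1 ≤ T) (d p c h s : ℕ → ℝ) (c0 : ℝ)
    (hceq : ∀ t, c t = c0) (hc0 : 0 < c0)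
    (hd : ∀ t, 0 ≤ d t) (hp : ∀ t, 0 ≤ p t) (hh : ∀ t, 0 ≤ h t) (hs : ∀ t, 0 ≤ s t)
    (β : ℝ) (hβ0 : 0 ≤ β) (hβ1 : β ≤ 1)
    (B0 R : ℝ) (hB0 : 0 ≤ B0) (hR : 0 ≤ R)
    (TL : ℕ) (hTL1 : 1 ≤ TL) (hTL2 : TL ≤ T)
    (y v : ℕ → ℝ) (hfeas : Feasible T d p c h s β B0 R TL y v) :
    ∃ yh : ℕ → ℝ,
      Feasible T d p c h s β B0 R TL yh v ∧
      (∀ t, 1 ≤ t → t + 1 ≤ T → ISeq yh v 1 t * yh (t + 1) = 0) ∧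
      BSeq p h s c R TL y v 1 B0 T ≤ BSeq p h s c R TL yh v 1 B0 T := by
  classical
  set g : ℕ → ℕ := gfun T y with hgdef
  set V : ℕ → ℝ := fun t => ∑ j ∈ Finset.Icc 1 t, v j with hVdef
  set Yc : ℕ → ℝ := fun t => ∑ j ∈ Finset.Icc 1 t, y j with hYdef
  set yh : ℕ → ℝ := fun j => V (g j) - V (g (j - 1)) with hyhdef
  -- basic extractions
  have hvnn : ∀ t, 1 ≤ t → t ≤ T → 0 ≤ v t := fun t h1 h2 => (hfeas t h1 h2).2.1
  have hynn : ∀ t, 1 ≤ t → t ≤ T → 0 ≤ y t := fun t h1 h2 => (hfeas t h1 h2).1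
  have hV0 : V 0 = 0 := by simp [hVdef]
  have hY0 : Yc 0 = 0 := by simp [hYdef]
  have hVmono : ∀ a b, a ≤ b → b ≤ T → V a ≤ V b := by
    intro a b hab hbT
    have := sum_Icc_one_split v hab
    have hnn : 0 ≤ ∑ j ∈ Finset.Ioc a b, v j := by
      apply Finset.sum_nonneg
      intro j hj
      rw [Finset.mem_Ioc] at hj
      exact hvnn j (by omega) (by omega)
    simp only [hVdef]
    linarith [this]
  have hIeq : ∀ (f : ℕ → ℝ) t, ISeq f v 1 t = (∑ j ∈ Finset.Icc 1 t, f j) - V t := by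
    intro f t
    simp [ISeq, hVdef, Finset.sum_sub_distrib]
  have hIy : ∀ t, t ≤ T → V t ≤ Yc t := by
    intro t ht
    rcases Nat.eq_zero_or_pos t with rfl | h1
    · rw [hV0, hY0]
    · have := (hfeas t h1 ht).2.2.2.1
      rw [hIeq y t] at this
      simp only [hYdef]
      linarith
  -- g facts
  have hgge : ∀ t, t ≤ T → t ≤ g t := fun t ht => (gfun_spec T y t ht).1
  have hgle : ∀ t, t ≤ T → g t ≤ T := fun t ht => (gfun_spec T y t ht).2.1
  have hgzero : ∀ t, t ≤ T → ∀ j, t < j → j ≤ g t → ¬ 0 < y j :=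
    fun t ht => (gfun_spec T y t ht).2.2.1
  have hglast : ∀ t, t ≤ T → (g t = T ∨ 0 < y (g t + 1)) :=
    fun t ht => (gfun_spec T y t ht).2.2.2
  have hgprod : ∀ t, t + 1 ≤ T → 0 < y (t + 1) → g t = t := by
    intro t ht hy
    exact gfun_unique T y t (by omega) t le_rfl (by omega)
      (fun j hj1 hj2 => absurd (lt_of_lt_of_le hj1 hj2) (lt_irrefl t)) (Or.inr hy)
  have hgprev : ∀ t, 1 ≤ t → t ≤ T → ¬ 0 < y t → g (t - 1) = g t := by
    intro t h1 h2 hy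
    refine gfun_unique T y (t - 1) (by omega) (g t) (by have := hgge t h2; omega)
      (hgle t h2) ?_ (hglast t h2)
    intro j hj1 hj2
    rcases Nat.eq_or_lt_of_le (by omega : t ≤ j) with rfl | hlt
    · exact hy
    · exact hgzero t h2 j hlt hj2
  have hgmono : ∀ t, 1 ≤ t → t ≤ T → g (t - 1) ≤ g t := by
    intro t h1 h2
    by_cases hy : 0 < y t
    · have : g (t - 1) = t - 1 := by
        have := hgprod (t - 1) (by omega)
        rw [show t - 1 + 1 = t by omega] at this
        exact this hy
      rw [this]
      have := hgge t h2
      omega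
    · rw [hgprev t h1 h2 hy]
  have hYg : ∀ t, t ≤ T → Yc (g t) = Yc t := by
    intro t ht
    have h1 := hgge t ht
    have h2 := hgle t ht
    have := sum_Icc_one_split y h1
    have hz : ∑ j ∈ Finset.Ioc t (g t), y j = 0 := by
      apply Finset.sum_eq_zero
      intro j hj
      rw [Finset.mem_Ioc] at hj
      have hnp := hgzero t ht j hj.1 hj.2
      have hnn := hynn j (by omega) (by omega)
      exact le_antisymm (not_lt.mp hnp) hnn
    simp only [hYdef]
    rw [this, hz, add_zero]
  have hVg0 : V (g 0) = 0 := by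
    have h2 : g 0 ≤ T := hgle 0 (Nat.zero_le T)
    have ha := hIy (g 0) h2
    have hb : Yc (g 0) = 0 := by rw [hYg 0 (Nat.zero_le T), hY0]
    have hc : V 0 ≤ V (g 0) := hVmono 0 (g 0) (Nat.zero_le _) h2
    rw [hV0] at hc
    linarith
  -- yh facts
  have hSum_yh : ∀ t, ∑ j ∈ Finset.Icc 1 t, yh j = V (g t) := by
    intro t
    have := telescope (fun j => V (g j)) t
    simp only [hyhdef]
    rw [this, hVg0, sub_zero]
  have hyhnn : ∀ t, 1 ≤ t → t ≤ T → 0 ≤ yh t := by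
    intro t h1 h2
    simp only [hyhdef]
    have := hVmono (g (t - 1)) (g t) (hgmono t h1 h2) (hgle t h2)
    linarith
  have hIh : ∀ t, t ≤ T → ISeq yh v 1 t = V (g t) - V t := by
    intro t ht
    rw [hIeq yh t, hSum_yh t]
  have hIhnn : ∀ t, t ≤ T → 0 ≤ ISeq yh v 1 t := by
    intro t ht
    rw [hIh t ht]
    have := hVmono t (g t) (hgge t ht) (hgle t ht)
    linarith
  have hVgY : ∀ t, t ≤ T → V (g t) ≤ Yc t := by
    intro t ht
    have := hIy (g t) (hgle t ht)
    rw [hYg t ht] at this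
    exact this
  have hIhle : ∀ t, t ≤ T → ISeq yh v 1 t ≤ ISeq y v 1 t := by
    intro t ht
    rw [hIh t ht, hIeq y t]
    have := hVgY t ht
    simp only [hYdef] at this ⊢
    linarith
  have hyh_zero : ∀ t, 1 ≤ t → t ≤ T → ¬ 0 < y t → yh t = 0 := by
    intro t h1 h2 hy
    simp only [hyhdef]
    rw [hgprev t h1 h2 hy, sub_self]
  have hind : ∀ t, 1 ≤ t → t ≤ T → setupInd (yh t) ≤ setupInd (y t) := by
    intro t h1 h2
    by_cases hy : 0 < y t
    · simp only [setupInd, if_pos hy]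
      split <;> norm_num
    · rw [hyh_zero t h1 h2 hy]
      simp [setupInd, hy]
  have hBnn : ∀ u, u ≤ T → 0 ≤ BSeq p h s c R TL y v 1 B0 u := by
    intro u hu
    rcases Nat.eq_zero_or_pos u with rfl | h1
    · exact hB0
    · exact (hfeas u h1 hu).2.2.2.2.2
  -- key inequality
  have key : ∀ t, t ≤ T →
      BSeq p h s c R TL y v 1 B0 t + c0 * (Yc t - V (g t)) ≤ BSeq p h s c R TL yh v 1 B0 t := by
    intro t
    induction t with
    | zero =>
      intro _
      rw [hY0, hVg0]
      show B0 + c0 * (0 - 0) ≤ B0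
      simp
    | succ n ih =>
      intro hn1
      have hn : n ≤ T := by omega
      have IH := ih hn
      rw [BSeq_succ, BSeq_succ]
      have e1 : Yc (n + 1) = Yc n + y (n + 1) := by
        simp only [hYdef]
        rw [Finset.sum_Icc_succ_top (by omega : 1 ≤ n + 1)]
      have e2 : yh (n + 1) = V (g (n + 1)) - V (g n) := by
        simp only [hyhdef, Nat.add_sub_cancel]
      have e4 : h (n + 1) * ISeq yh v 1 (n + 1) ≤ h (n + 1) * ISeq y v 1 (n + 1) :=
        mul_le_mul_of_nonneg_left (hIhle (n + 1) hn1) (hh _)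
      have e5 : s (n + 1) * setupInd (yh (n + 1)) ≤ s (n + 1) * setupInd (y (n + 1)) :=
        mul_le_mul_of_nonneg_left (hind _ (by omega) hn1) (hs _)
      rw [e2] at e5
      rw [e1, e2, hceq (n + 1)]
      have e7 : c0 * (Yc n + y (n + 1) - V (g (n + 1)))
          = c0 * (Yc n - V (g n)) + c0 * y (n + 1) - c0 * (V (g (n + 1)) - V (g n)) := by ring
      linarith [IH, e4, e5, e7]
  have hfin : ∀ t, t ≤ T → 0 ≤ c0 * (Yc t - V (g t)) :=
    fun t ht => mul_nonneg hc0.le (by linarith [hVgY t ht])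
  refine ⟨yh, ?_, ?_, ?_⟩
  · -- feasibility of yh
    intro t h1 h2
    obtain ⟨m, rfl⟩ : ∃ m, t = m + 1 := ⟨t - 1, by omega⟩
    have Ho := hfeas (m + 1) h1 h2
    refine ⟨hyhnn _ h1 h2, Ho.2.1, Ho.2.2.1, hIhnn _ h2, ?_, ?_⟩
    · simp only [Nat.add_sub_cancel]
      have hkey := key m (by omega)
      by_cases hy0 : 0 < y (m + 1)
      · have hb := Ho.2.2.2.2.1
        simp only [Nat.add_sub_cancel] at hb
        have e2 : yh (m + 1) = V (g (m + 1)) - V (g m) := by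
          simp only [hyhdef, Nat.add_sub_cancel]
        have hle : V (g (m + 1)) ≤ Yc (m + 1) := hVgY (m + 1) h2
        have e1 : Yc (m + 1) = Yc m + y (m + 1) := by
          simp only [hYdef]
          rw [Finset.sum_Icc_succ_top (by omega : 1 ≤ m + 1)]
        have e5 : s (m + 1) * setupInd (yh (m + 1)) ≤ s (m + 1) * setupInd (y (m + 1)) :=
          mul_le_mul_of_nonneg_left (hind _ h1 h2) (hs _)
        rw [e2] at e5
        have e6 : c0 * V (g (m + 1)) ≤ c0 * (Yc m + y (m + 1)) := by
          rw [← e1]; exact mul_le_mul_of_nonneg_left hle hc0.le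
        rw [e2, hceq (m + 1)]
        rw [hceq (m + 1)] at hb
        have e7 : c0 * (V (g (m + 1)) - V (g m))
            = c0 * V (g (m + 1)) - c0 * V (g m) := by ring
        have e8 : c0 * (Yc m - V (g m)) = c0 * Yc m - c0 * V (g m) := by ring
        have e9 : c0 * (Yc m + y (m + 1)) = c0 * Yc m + c0 * y (m + 1) := by ring
        linarith [hkey, e5, e6]
      · rw [hyh_zero _ h1 h2 hy0]
        norm_num [setupInd]
        have := hBnn m (by omega)
        have := hfin m (by omega)
        linarith [key m (by omega)]
    · have := hBnn (m + 1) h2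
      have := hfin (m + 1) h2
      linarith [key (m + 1) h2]
  · -- ZIO
    intro t h1 h2
    by_cases hy0 : 0 < y (t + 1)
    · have hgt := hgprod t h2 hy0
      have : ISeq yh v 1 t = 0 := by
        rw [hIh t (by omega), hgt, sub_self]
      rw [this, zero_mul]
    · rw [hyh_zero (t + 1) (by omega) h2 hy0, mul_zero]
  · -- final capital
    have := hfin T le_rfl
    linarith [key T le_rfl]
end

section
/- Let (y, v) be a feasible plan and let m ≤ t < T be periods such that I_{m−1} = 0, y_m > I_t > 0, y_j = 0 for all m < j ≤ t, and y_{t+1} > 0. Suppose c_m + Σ_{i=m}^{t} h_i ≥ c_{t+1}. Then the plan (y′, v) obtained by setting y′_m = y_m − I_t, y′_{t+1} = y_{t+1} + I_t and y′_j = y_j for all other j is again feasible, its inventories satisfy I′_j = I_j − I_t for m ≤ j ≤ t and I′_j = I_j otherwise, and its final capital satisfies B′_T = B_T + ( c_m + Σ_{i=m}^{t} h_i − c_{t+1} )·I_t ≥ B_T. -/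
/-- moving the excess entering inventory `I_t` of production period `t+1`
out of the earlier production period `m` keeps feasibility and does not decrease the
final capital when `c_m + Σ_{i=m}^t h_i ≥ c_{t+1}`. -/
theorem stmt3 (T : ℕ) (hT : 1 ≤ T) (d p c h s : ℕ → ℝ)
    (hc : ∀ t, 0 < c t)
    (hd : ∀ t, 0 ≤ d t) (hp : ∀ t, 0 ≤ p t) (hh : ∀ t, 0 ≤ h t) (hs : ∀ t, 0 ≤ s t)
    (β : ℝ) (hβ0 : 0 ≤ β) (hβ1 : β ≤ 1)
    (B0 R : ℝ) (hB0 : 0 ≤ B0) (hR : 0 ≤ R)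
    (TL : ℕ) (hTL1 : 1 ≤ TL) (hTL2 : TL ≤ T)
    (y v : ℕ → ℝ) (hfeas : Feasible T d p c h s β B0 R TL y v)
    (m t : ℕ) (hm : 1 ≤ m) (hmt : m ≤ t) (htT : t < T)
    (hIm : ISeq y v 1 (m - 1) = 0)
    (hIt_pos : 0 < ISeq y v 1 t)
    (hym : ISeq y v 1 t < y m)
    (hy0 : ∀ j, m < j → j ≤ t → y j = 0)
    (hyt1 : 0 < y (t + 1))
    (hcost : c (t + 1) ≤ c m + ∑ i ∈ Finset.Icc m t, h i)
    (y' : ℕ → ℝ)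
    (hy' : y' = fun j => if j = m then y m - ISeq y v 1 t
      else if j = t + 1 then y (t + 1) + ISeq y v 1 t else y j) :
    Feasible T d p c h s β B0 R TL y' v ∧
    (∀ j, m ≤ j → j ≤ t → ISeq y' v 1 j = ISeq y v 1 j - ISeq y v 1 t) ∧
    (∀ j, j < m ∨ t < j → ISeq y' v 1 j = ISeq y v 1 j) ∧
    BSeq p h s c R TL y' v 1 B0 T
      = BSeq p h s c R TL y v 1 B0 T
        + (c m + (∑ i ∈ Finset.Icc m t, h i) - c (t + 1)) * ISeq y v 1 t ∧
    BSeq p h s c R TL y v 1 B0 T ≤ BSeq p h s c R TL y' v 1 B0 T := by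
  set Δ := ISeq y v 1 t with hΔdef
  have hΔ : 0 < Δ := hIt_pos
  have hy'm : y' m = y m - Δ := by simp only [hy', if_pos rfl]
  have hy't : y' (t + 1) = y (t + 1) + Δ := by
    rw [hy']; simp [show t + 1 ≠ m from by omega]
  have hy'o : ∀ j, j ≠ m → j ≠ t + 1 → y' j = y j := by
    intro j h1 h2; simp only [hy']; rw [if_neg h1, if_neg h2]
  -- basic recursion for BSeq
  have hBrec : ∀ (yy : ℕ → ℝ) (j : ℕ), BSeq p h s c R TL yy v 1 B0 (j + 1) =
      BSeq p h s c R TL yy v 1 B0 j + p (j + 1) * v (j + 1)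
        - h (j + 1) * ISeq yy v 1 (j + 1) - s (j + 1) * setupInd (yy (j + 1))
        - c (j + 1) * yy (j + 1) - (if j + 1 = TL then R else 0) := by
    intro yy j
    rw [BSeq]
    simp
  have hB0eq : ∀ (yy : ℕ → ℝ), BSeq p h s c R TL yy v 1 B0 0 = B0 := by
    intro yy; rw [BSeq]
  -- inventory difference
  have hIdiff : ∀ j, ISeq y' v 1 j = ISeq y v 1 j
      + ((if m ∈ Finset.Icc 1 j then -Δ else 0)
        + (if t + 1 ∈ Finset.Icc 1 j then Δ else 0)) := by
    intro j
    have hpt : ∀ i, y' i - v i = (y i - v i)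
        + ((if i = m then -Δ else 0) + (if i = t + 1 then Δ else 0)) := by
      intro i
      by_cases h1 : i = m
      · subst h1; rw [hy'm, if_pos rfl, if_neg (by omega)]; ring
      · by_cases h2 : i = t + 1
        · subst h2; rw [hy't, if_neg h1, if_pos rfl]; ring
        · rw [hy'o i h1 h2, if_neg h1, if_neg h2]; ring
    unfold ISeq
    simp_rw [hpt]
    rw [Finset.sum_add_distrib, Finset.sum_add_distrib,
      Finset.sum_ite_eq' (Finset.Icc 1 j) m (fun _ => -Δ),
      Finset.sum_ite_eq' (Finset.Icc 1 j) (t + 1) (fun _ => Δ)]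
  have hIlt : ∀ j, j < m → ISeq y' v 1 j = ISeq y v 1 j := by
    intro j hj
    have h1 : m ∉ Finset.Icc 1 j := by simp only [Finset.mem_Icc]; omega
    have h2 : t + 1 ∉ Finset.Icc 1 j := by simp only [Finset.mem_Icc]; omega
    rw [hIdiff, if_neg h1, if_neg h2]; ring
  have hImid : ∀ j, m ≤ j → j ≤ t → ISeq y' v 1 j = ISeq y v 1 j - Δ := by
    intro j hj1 hj2
    have h1 : m ∈ Finset.Icc 1 j := by simp only [Finset.mem_Icc]; omega
    have h2 : t + 1 ∉ Finset.Icc 1 j := by simp only [Finset.mem_Icc]; omega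
    rw [hIdiff, if_pos h1, if_neg h2]; ring
  have hIgt : ∀ j, t < j → ISeq y' v 1 j = ISeq y v 1 j := by
    intro j hj
    have h1 : m ∈ Finset.Icc 1 j := by simp only [Finset.mem_Icc]; omega
    have h2 : t + 1 ∈ Finset.Icc 1 j := by simp only [Finset.mem_Icc]; omega
    rw [hIdiff, if_pos h1, if_pos h2]; ring
  -- I_t is the minimum inventory on [m, t]
  have hImid_ge : ∀ j, m ≤ j → j ≤ t → Δ ≤ ISeq y v 1 j := by
    intro j hj1 hj2
    have e1 : ∀ n, ISeq y v 1 n = ∑ i ∈ Finset.Ioc 0 n, (y i - v i) := by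
      intro n; unfold ISeq; rw [← Finset.Icc_add_one_left_eq_Ioc (a := 0)]; rfl
    have hsplit := Finset.sum_Ioc_consecutive (fun i => y i - v i)
      (Nat.zero_le j) hj2
    have hnp : ∑ i ∈ Finset.Ioc j t, (y i - v i) ≤ 0 := by
      apply Finset.sum_nonpos
      intro i hi
      rw [Finset.mem_Ioc] at hi
      have hyi : y i = 0 := hy0 i (by omega) hi.2
      have hvi : 0 ≤ v i := (hfeas i (by omega) (by omega)).2.1
      linarith
    rw [hΔdef, e1 t, e1 j, ← hsplit]
    linarith
  -- setup indicators unchanged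
  have hsetupm : setupInd (y' m) = setupInd (y m) := by
    rw [hy'm]; unfold setupInd
    rw [if_pos (by linarith), if_pos (by linarith)]
  have hsetupt : setupInd (y' (t + 1)) = setupInd (y (t + 1)) := by
    rw [hy't]; unfold setupInd
    rw [if_pos (by linarith), if_pos hyt1]
  -- capital differences by phase
  have hBlt : ∀ j, j < m →
      BSeq p h s c R TL y' v 1 B0 j = BSeq p h s c R TL y v 1 B0 j := by
    intro j
    induction j with
    | zero => intro _; rw [hB0eq, hB0eq]
    | succ n ih =>
      intro hj
      rw [hBrec y' n, hBrec y n, ih (by omega), hIlt (n + 1) hj,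
        hy'o (n + 1) (by omega) (by omega)]
  have hBmid : ∀ j, m ≤ j → j ≤ t →
      BSeq p h s c R TL y' v 1 B0 j = BSeq p h s c R TL y v 1 B0 j
        + (c m + ∑ i ∈ Finset.Icc m j, h i) * Δ := by
    intro j hj1
    induction j, hj1 using Nat.le_induction with
    | base =>
      intro _
      obtain ⟨k, rfl⟩ : ∃ k, m = k + 1 := ⟨m - 1, by omega⟩
      rw [hBrec y' k, hBrec y k, hBlt k (by omega),
        hImid (k + 1) le_rfl (by omega), hsetupm, hy'm,
        Finset.Icc_self, Finset.sum_singleton]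
      ring
    | succ n hn ih =>
      intro h2
      rw [hBrec y' n, hBrec y n, ih (by omega),
        hImid (n + 1) (by omega) h2, hy'o (n + 1) (by omega) (by omega),
        Finset.sum_Icc_succ_top (by omega : m ≤ n + 1)]
      ring
  have hBgt : ∀ j, t + 1 ≤ j →
      BSeq p h s c R TL y' v 1 B0 j = BSeq p h s c R TL y v 1 B0 j
        + (c m + (∑ i ∈ Finset.Icc m t, h i) - c (t + 1)) * Δ := by
    intro j hj
    induction j, hj using Nat.le_induction with
    | base =>
      rw [hBrec y' t, hBrec y t, hBmid t hmt le_rfl, hIgt (t + 1) (by omega),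
        hsetupt, hy't]
      ring
    | succ n hn ih =>
      rw [hBrec y' n, hBrec y n, ih, hIgt (n + 1) (by omega),
        hy'o (n + 1) (by omega) (by omega)]
      ring
  have hKnn : 0 ≤ c m + (∑ i ∈ Finset.Icc m t, h i) - c (t + 1) := by linarith
  have hmidnn : ∀ j, 0 ≤ c m + ∑ i ∈ Finset.Icc m j, h i := by
    intro j
    have h1 : (0:ℝ) ≤ ∑ i ∈ Finset.Icc m j, h i :=
      Finset.sum_nonneg fun i _ => hh i
    linarith [hc m]
  have hBge : ∀ j, BSeq p h s c R TL y v 1 B0 j ≤ BSeq p h s c R TL y' v 1 B0 j := by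
    intro j
    rcases lt_or_ge j m with hj | hj
    · rw [hBlt j hj]
    · rcases le_or_gt j t with hj2 | hj2
      · rw [hBmid j hj hj2]
        have := mul_nonneg (hmidnn j) hΔ.le
        linarith
      · rw [hBgt j (by omega)]
        have := mul_nonneg hKnn hΔ.le
        linarith
  refine ⟨?_, fun j hj1 hj2 => hImid j hj1 hj2, ?_, hBgt T (by omega), hBge T⟩
  · -- feasibility of the new plan
    intro j hj1 hjT
    obtain ⟨h1, h2, h3, h4, h5, h6⟩ := hfeas j hj1 hjT
    refine ⟨?_, h2, h3, ?_, ?_, h6.trans (hBge j)⟩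
    · by_cases hjm : j = m
      · subst hjm; rw [hy'm]; linarith
      · by_cases hjt : j = t + 1
        · subst hjt; rw [hy't]; linarith
        · rw [hy'o j hjm hjt]; exact h1
    · rcases lt_or_ge j m with hj | hj
      · rw [hIlt j hj]; exact h4
      · rcases le_or_gt j t with hj2 | hj2
        · rw [hImid j hj hj2]
          linarith [hImid_ge j hj hj2]
        · rw [hIgt j hj2]; exact h4
    · by_cases hjm : j = m
      · subst hjm
        rw [hsetupm, hy'm, hBlt (j - 1) (by omega)]
        have hcm := mul_pos (hc j) hΔ
        nlinarith
      · by_cases hjt : j = t + 1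
        · subst hjt
          rw [hsetupt, hy't, show t + 1 - 1 = t from rfl, hBmid t hmt le_rfl]
          have h5' : s (t + 1) * setupInd (y (t + 1)) + c (t + 1) * y (t + 1)
              ≤ BSeq p h s c R TL y v 1 B0 t := by
            simpa using h5
          have hmul : c (t + 1) * Δ ≤ (c m + ∑ i ∈ Finset.Icc m t, h i) * Δ :=
            mul_le_mul_of_nonneg_right hcost hΔ.le
          rw [mul_add]
          linarith
        · rw [hy'o j hjm hjt]
          exact h5.trans (hBge (j - 1))
  · intro j hj
    rcases hj with hj | hj
    · exact hIlt j hj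
    · exact hIgt j hj
end

section
/- For every t ∈ {1,…,T+1} and all fixed I ≥ 0 and w ≥ 0, the value function is nondecreasing in the capital argument: if 0 ≤ B ≤ B′ then f_t(I, B, w) ≤ f_t(I, B′, w) (in ℝ ∪ {−∞}). -/
/-- Backward value function: `fVal T d p c h s β R TL k I B w` is `f_{T+1-k}(I,B,w)`,
the maximum capital increment over periods `T+1-k,…,T` (in `EReal`, `sSup ∅ = ⊥`). -/
noncomputable def fVal (T : ℕ) (d p c h s : ℕ → ℝ) (β R : ℝ) (TL : ℕ) :
    ℕ → ℝ → ℝ → ℝ → EReal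
  | 0 => fun _ _ _ => 0
  | k + 1 => fun I B w =>
    sSup {x : EReal | ∃ yy vv Bn : ℝ,
      0 ≤ yy ∧ 0 ≤ vv ∧ vv ≤ max 0 (d (T - k) - β * w) ∧
      s (T - k) * setupInd yy + c (T - k) * yy ≤ B ∧
      0 ≤ I + yy - vv ∧
      Bn = B + p (T - k) * vv - h (T - k) * (I + yy - vv)
        - s (T - k) * setupInd yy - c (T - k) * yy
        - (if T - k = TL then R else 0) ∧
      0 ≤ Bn ∧
      x = ((Bn - B : ℝ) : EReal)
        + fVal T d p c h s β R TL k (I + yy - vv) Bn (max 0 (d (T - k) - β * w) - vv)}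

lemma fVal_mono_B (T : ℕ) (d p c h s : ℕ → ℝ) (β R : ℝ) (TL : ℕ) :
    ∀ k (I B B' w : ℝ), B ≤ B' →
      fVal T d p c h s β R TL k I B w ≤ fVal T d p c h s β R TL k I B' w := by
  intro k
  induction k with
  | zero => intro I B B' w _; simp [fVal]
  | succ k ih =>
    intro I B B' w hBB'
    simp only [fVal]
    apply sSup_le_sSup_of_isCofinalFor
    rintro x ⟨yy, vv, Bn, hy, hv, hvmax, hbudget, hInv, hBn, hBn0, hx⟩
    refine ⟨_, ⟨yy, vv, Bn + (B' - B), hy, hv, hvmax, hbudget.trans hBB', hInv,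
      by rw [hBn]; ring, by linarith, rfl⟩, ?_⟩
    rw [hx, show (Bn + (B' - B) - B' : ℝ) = Bn - B from by ring]
    exact add_le_add_right (ih _ _ _ _ (by linarith)) _

/-- the value function `f_t` is nondecreasing in the capital argument. -/
theorem stmt4 (T : ℕ) (hT : 1 ≤ T) (d p c h s : ℕ → ℝ)
    (hc : ∀ t, 0 < c t)
    (hd : ∀ t, 0 ≤ d t) (hp : ∀ t, 0 ≤ p t) (hh : ∀ t, 0 ≤ h t) (hs : ∀ t, 0 ≤ s t)
    (β : ℝ) (hβ0 : 0 ≤ β) (hβ1 : β ≤ 1)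
    (R : ℝ) (hR : 0 ≤ R)
    (TL : ℕ) (hTL1 : 1 ≤ TL) (hTL2 : TL ≤ T)
    (t : ℕ) (ht1 : 1 ≤ t) (ht2 : t ≤ T + 1)
    (I w B B' : ℝ) (hI : 0 ≤ I) (hw : 0 ≤ w) (hB : 0 ≤ B) (hBB' : B ≤ B') :
    fVal T d p c h s β R TL (T + 1 - t) I B w
      ≤ fVal T d p c h s β R TL (T + 1 - t) I B' w := by
  exact fVal_mono_B T d p c h s β R TL _ I B B' w hBB'
end

section
/- Let (y, v) be a feasible plan with two consecutive production periods t1 < t2, i.e. y_{t1} > 0, y_{t2} > 0 and y_j = 0 for t1 < j < t2, and suppose c_{t1} + Σ_{i=t1}^{t2−1} h_i < c_{t2}. Let Δ satisfy 0 < Δ < y_{t2}, Δ ≤ (B_{t1−1} − s_{t1})/c_{t1} − y_{t1}, and ( c_{t1} + Σ_{i=t1}^{t} h_i )·Δ ≤ B_t for every t with t1 ≤ t ≤ t2 − 1. Then the plan (y′, v) with y′_{t1} = y_{t1} + Δ, y′_{t2} = y_{t2} − Δ and y′_j = y_j otherwise is feasible, and its final capital satisfies B′_T = B_T + ( c_{t2}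 − c_{t1} − Σ_{i=t1}^{t2−1} h_i )·Δ > B_T. -/
lemma BSeq_one_succ (p h s c : ℕ → ℝ) (R : ℝ) (TL : ℕ) (y v : ℕ → ℝ) (B0 : ℝ) (t : ℕ) :
    BSeq p h s c R TL y v 1 B0 (t+1)
      = BSeq p h s c R TL y v 1 B0 t + p (t + 1) * v (t + 1)
        - h (t + 1) * ISeq y v 1 (t + 1)
        - s (t + 1) * setupInd (y (t + 1))
        - c (t + 1) * y (t + 1)
        - (if t + 1 = TL then R else 0) := by
  simp [BSeq]

/-- moving a production amount `Δ` from production period `t2` back to the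
previous production period `t1` keeps feasibility and strictly increases the final
capital when `c_{t1} + Σ_{i=t1}^{t2-1} h_i < c_{t2}`. -/
theorem stmt8 (T : ℕ) (hT : 1 ≤ T) (d p c h s : ℕ → ℝ)
    (hc : ∀ t, 0 < c t)
    (hd : ∀ t, 0 ≤ d t) (hp : ∀ t, 0 ≤ p t) (hh : ∀ t, 0 ≤ h t) (hs : ∀ t, 0 ≤ s t)
    (β : ℝ) (hβ0 : 0 ≤ β) (hβ1 : β ≤ 1)
    (B0 R : ℝ) (hB0 : 0 ≤ B0) (hR : 0 ≤ R)
    (TL : ℕ) (hTL1 : 1 ≤ TL) (hTL2 : TL ≤ T)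
    (y v : ℕ → ℝ) (hfeas : Feasible T d p c h s β B0 R TL y v)
    (t1 t2 : ℕ) (ht1 : 1 ≤ t1) (ht12 : t1 < t2) (ht2 : t2 ≤ T)
    (hyt1 : 0 < y t1) (hyt2 : 0 < y t2)
    (hy0 : ∀ j, t1 < j → j < t2 → y j = 0)
    (hcost : c t1 + ∑ i ∈ Finset.Icc t1 (t2 - 1), h i < c t2)
    (Δ : ℝ) (hΔpos : 0 < Δ) (hΔlt : Δ < y t2)
    (hΔcap : Δ ≤ (BSeq p h s c R TL y v 1 B0 (t1 - 1) - s t1) / c t1 - y t1)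
    (hΔmid : ∀ t, t1 ≤ t → t ≤ t2 - 1 →
      (c t1 + ∑ i ∈ Finset.Icc t1 t, h i) * Δ ≤ BSeq p h s c R TL y v 1 B0 t)
    (y' : ℕ → ℝ)
    (hy' : y' = fun j => if j = t1 then y t1 + Δ
      else if j = t2 then y t2 - Δ else y j) :
    Feasible T d p c h s β B0 R TL y' v ∧
    BSeq p h s c R TL y' v 1 B0 T
      = BSeq p h s c R TL y v 1 B0 T
        + (c t2 - c t1 - ∑ i ∈ Finset.Icc t1 (t2 - 1), h i) * Δ ∧
    BSeq p h s c R TL y v 1 B0 T < BSeq p h s c R TL y' v 1 B0 T := by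
  have ht1t2 : t1 ≠ t2 := Nat.ne_of_lt ht12
  have hy'at : ∀ j, y' j = if j = t1 then y t1 + Δ
      else if j = t2 then y t2 - Δ else y j := fun j => by rw [hy']
  have hy't1 : y' t1 = y t1 + Δ := by rw [hy'at]; simp
  have hy't2 : y' t2 = y t2 - Δ := by rw [hy'at]; simp [ht1t2.symm]
  have hy'other : ∀ j, j ≠ t1 → j ≠ t2 → y' j = y j := by
    intro j h1 h2; rw [hy'at]; simp [h1, h2]
  -- setup indicator unchanged
  have hsetup : ∀ j, setupInd (y' j) = setupInd (y j) := by
    intro j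
    rcases eq_or_ne j t1 with rfl | h1
    · rw [hy't1]; unfold setupInd
      rw [if_pos hyt1, if_pos (by linarith)]
    · rcases eq_or_ne j t2 with rfl | h2
      · rw [hy't2]; unfold setupInd
        rw [if_pos hyt2, if_pos (by linarith)]
      · rw [hy'other j h1 h2]
  -- inventory difference
  have hIdiff : ∀ t, ISeq y' v 1 t
      = ISeq y v 1 t + (if t1 ≤ t ∧ t < t2 then Δ else 0) := by
    intro t
    unfold ISeq
    have key : ∀ j, y' j - v j
        = (y j - v j) + ((if j = t1 then Δ else 0) + (if j = t2 then -Δ else 0)) := by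
      intro j
      rcases eq_or_ne j t1 with rfl | h1
      · rw [hy't1]; simp [ht1t2]; ring
      · rcases eq_or_ne j t2 with rfl | h2
        · rw [hy't2]; simp [h1]; ring
        · rw [hy'other j h1 h2]; simp [h1, h2]
    simp_rw [key]
    rw [Finset.sum_add_distrib, Finset.sum_add_distrib,
      Finset.sum_ite_eq' (Finset.Icc 1 t) t1 (fun _ => Δ),
      Finset.sum_ite_eq' (Finset.Icc 1 t) t2 (fun _ => -Δ)]
    simp only [Finset.mem_Icc]
    have h1t2 : 1 ≤ t2 := le_trans ht1 (le_of_lt ht12)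
    by_cases hA : t1 ≤ t
    · by_cases hB : t2 ≤ t
      · rw [if_pos ⟨ht1, hA⟩, if_pos ⟨h1t2, hB⟩, if_neg (by omega)]; ring
      · rw [if_pos ⟨ht1, hA⟩, if_neg (by omega), if_pos ⟨hA, by omega⟩]; ring
    · rw [if_neg (by omega), if_neg (by omega), if_neg (by omega)]; ring
  -- capital difference
  have hBdiff : ∀ t, BSeq p h s c R TL y' v 1 B0 t
      = BSeq p h s c R TL y v 1 B0 t
        + (if t < t1 then 0
           else if t < t2 then -((c t1 + ∑ i ∈ Finset.Icc t1 t, h i) * Δ)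
           else (c t2 - c t1 - ∑ i ∈ Finset.Icc t1 (t2 - 1), h i) * Δ) := by
    intro t
    induction t with
    | zero =>
        rw [if_pos (by omega)]
        show BSeq p h s c R TL y' v 1 B0 0 = BSeq p h s c R TL y v 1 B0 0 + 0
        simp [BSeq]
    | succ t ih =>
        rw [BSeq_one_succ, BSeq_one_succ, ih, hIdiff (t+1), hsetup (t+1), hy'at (t+1)]
        rcases lt_trichotomy (t+1) t1 with hA | hA | hA
        · rw [if_neg (show t+1 ≠ t1 by omega), if_neg (show t+1 ≠ t2 by omega),
            if_neg (show ¬ (t1 ≤ t+1 ∧ t+1 < t2) by omega),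
            if_pos (show t < t1 by omega), if_pos hA]
          ring
        · rw [if_pos hA, hA,
            if_pos (show t1 ≤ t1 ∧ t1 < t2 by omega),
            if_pos (show t < t1 by omega),
            if_neg (show ¬ t1 < t1 by omega),
            if_pos (show t1 < t2 by omega),
            Finset.Icc_self, Finset.sum_singleton]
          ring
        · rcases lt_trichotomy (t+1) t2 with hB | hB | hB
          · rw [if_neg (show t+1 ≠ t1 by omega), if_neg (show t+1 ≠ t2 by omega),
              if_pos (show t1 ≤ t+1 ∧ t+1 < t2 by omega),
              if_neg (show ¬ t < t1 by omega), if_pos (show t < t2 by omega),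
              if_neg (show ¬ t+1 < t1 by omega), if_pos hB,
              Finset.sum_Icc_succ_top (show t1 ≤ t + 1 by omega)]
            ring
          · rw [if_neg (show t+1 ≠ t1 by omega), if_pos hB,
              if_neg (show ¬ (t1 ≤ t+1 ∧ t+1 < t2) by omega),
              if_neg (show ¬ t < t1 by omega), if_pos (show t < t2 by omega),
              if_neg (show ¬ t+1 < t1 by omega), if_neg (show ¬ t+1 < t2 by omega)]
            have htt : t2 - 1 = t := by omega
            rw [htt, ← hB]
            ring
          · rw [if_neg (show t+1 ≠ t1 by omega), if_neg (show t+1 ≠ t2 by omega),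
              if_neg (show ¬ (t1 ≤ t+1 ∧ t+1 < t2) by omega),
              if_neg (show ¬ t < t1 by omega), if_neg (show ¬ t < t2 by omega),
              if_neg (show ¬ t+1 < t1 by omega), if_neg (show ¬ t+1 < t2 by omega)]
            ring
  have hgain : 0 < (c t2 - c t1 - ∑ i ∈ Finset.Icc t1 (t2 - 1), h i) * Δ := by
    apply mul_pos _ hΔpos; linarith
  refine ⟨?_, ?_, ?_⟩
  · -- feasibility
    intro t htl htu
    obtain ⟨f1, f2, f3, f4, f5, f6⟩ := hfeas t htl htu
    refine ⟨?_, f2, f3, ?_, ?_, ?_⟩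
    · -- 0 ≤ y' t
      rcases eq_or_ne t t1 with rfl | h1
      · rw [hy't1]; linarith
      · rcases eq_or_ne t t2 with rfl | h2
        · rw [hy't2]; linarith
        · rw [hy'other t h1 h2]; exact f1
    · -- inventory
      rw [hIdiff t]
      split_ifs with hcnd
      · linarith
      · linarith
    · -- budget constraint
      rw [hsetup t, hBdiff (t-1)]
      rcases lt_trichotomy t t1 with hA | hA | hA
      · rw [hy'other t (by omega) (by omega), if_pos (by omega : t - 1 < t1)]
        linarith
      · rw [hy'at t, if_pos hA, if_pos (show t - 1 < t1 by omega), hA]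
        have hct : 0 < c t1 := hc t1
        have hsetup1 : setupInd (y t1) = 1 := if_pos hyt1
        rw [hsetup1]
        have hcap : (Δ + y t1) * c t1 ≤ BSeq p h s c R TL y v 1 B0 (t1 - 1) - s t1 := by
          rw [← le_div_iff₀ hct]; linarith [hΔcap]
        linarith [hcap]
      · rcases lt_trichotomy t t2 with hB | hB | hB
        · have hy0t : y t = 0 := hy0 t hA hB
          rw [hy'other t (by omega) (by omega), hy0t]
          have hsi : setupInd (0:ℝ) = 0 := by
            unfold setupInd; rw [if_neg (lt_irrefl 0)]
          rw [hsi, if_neg (show ¬ t - 1 < t1 by omega), if_pos (show t - 1 < t2 by omega)]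
          have := hΔmid (t-1) (by omega) (by omega)
          simp only [mul_zero, add_zero]
          linarith
        · rw [hB] at f5 ⊢
          rw [hy'at t2, if_neg (show t2 ≠ t1 by omega), if_pos rfl,
            if_neg (show ¬ t2 - 1 < t1 by omega), if_pos (show t2 - 1 < t2 by omega)]
          have hsetup1 : setupInd (y t2) = 1 := if_pos hyt2
          rw [hsetup1]
          rw [hsetup1] at f5
          have hsum : (c t1 + ∑ i ∈ Finset.Icc t1 (t2-1), h i) * Δ ≤ c t2 * Δ :=
            mul_le_mul_of_nonneg_right hcost.le hΔpos.le
          linarith [f5, hsum]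
        · rw [hy'other t (by omega) (by omega),
            if_neg (by omega : ¬ t - 1 < t1), if_neg (by omega : ¬ t - 1 < t2)]
          linarith
    · -- 0 ≤ B' t
      rw [hBdiff t]
      rcases lt_trichotomy t t1 with hA | hA | hA
      · rw [if_pos hA]; linarith
      · rw [if_neg (by omega : ¬ t < t1), if_pos (by omega : t < t2)]
        have := hΔmid t (by omega) (by omega)
        linarith
      · by_cases hB : t < t2
        · rw [if_neg (by omega : ¬ t < t1), if_pos hB]
          have := hΔmid t (by omega) (by omega)
          linarith
        · rw [if_neg (by omega : ¬ t < t1), if_neg hB]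
          linarith
  · rw [hBdiff T, if_neg (by omega : ¬ T < t1), if_neg (by omega : ¬ T < t2)]
  · rw [hBdiff T, if_neg (by omega : ¬ T < t1), if_neg (by omega : ¬ T < t2)]
    linarith
end

section
/- Let d ≥ 0, w ≥ 0, β ∈ [0,1], and let M be a real with M > max(d, β·w). For a real number Ed, the following are equivalent: (i) Ed = max(0, d − β·w); (ii) there exists δ ∈ {0,1} such that d ≤ β·w + M·δ, d ≥ β·w − M·(1−δ), Ed ≤ d − β·w + M·(1−δ), Ed ≥ d − β·w − M·(1−δ), Ed ≤ d·δ, and Ed ≥ 0. -/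
/-- single-period correctness of the big-M linearization of the
effective-demand equation `Ed = max 0 (d - β·w)`. -/
theorem stmt10 (d w β M Ed : ℝ)
    (hd : 0 ≤ d) (hw : 0 ≤ w) (hβ0 : 0 ≤ β) (hβ1 : β ≤ 1)
    (hM : max d (β * w) < M) :
    Ed = max 0 (d - β * w) ↔
      ∃ δ : ℝ, (δ = 0 ∨ δ = 1) ∧
        d ≤ β * w + M * δ ∧
        β * w - M * (1 - δ) ≤ d ∧
        Ed ≤ d - β * w + M * (1 - δ) ∧
        d - β * w - M * (1 - δ) ≤ Ed ∧
        Ed ≤ d * δ ∧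
        0 ≤ Ed := by
  have hdM : d < M := lt_of_le_of_lt (le_max_left _ _) hM
  have hwM : β * w < M := lt_of_le_of_lt (le_max_right _ _) hM
  have hbw : 0 ≤ β * w := mul_nonneg hβ0 hw
  constructor
  · intro h
    rcases le_or_gt d (β * w) with hle | hlt
    · refine ⟨0, Or.inl rfl, ?_⟩
      have hmax : max 0 (d - β * w) = 0 := max_eq_left (by linarith)
      rw [h, hmax]
      norm_num
      refine ⟨by linarith, by linarith, by linarith, by linarith⟩
    · refine ⟨1, Or.inr rfl, ?_⟩
      have hmax : max 0 (d - β * w) = d - β * w := max_eq_right (by linarith)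
      rw [h, hmax]
      norm_num
      refine ⟨by linarith, by linarith, by linarith, by linarith⟩
  · rintro ⟨δ, hδ | hδ, h1, h2, h3, h4, h5, h6⟩ <;> subst hδ
    · simp at h1 h5
      have : Ed = 0 := le_antisymm h5 h6
      rw [this, eq_comm]
      exact max_eq_left (by linarith)
    · norm_num at h3 h4
      have : Ed = d - β * w := by linarith
      rw [this, eq_comm]
      exact max_eq_right (by linarith)
end
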